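/- arXiv:2511.06505 — 3 statements merged into one kernel-verified Lean document; each statement's English description precedes it below -/
import Mathlib

section
/- Let D=(V,A) be a finite digraph with rational capacities u, source s, sink t, and let k ∈ ℕ with k ≤ |A|. Let S_k := {S ⊆ A : |S| = k} and Δ(S_k) := {z ∈ [0,1]^{S_k} : ∑_{S∈S_k} z_S = 1}. Then the maximum robust flow value equals the randomized network interdiction value: max_{x∈X} min_{S∈S_k} ∑_{P∈𝒫, P∩S=∅} x_P = min_{z∈Δ(S_k)} max_{x∈X} ∑_{P∈𝒫} (1 − ∑_{S∈S_k, P∩S≠∅} z_S)·x_P, and both optima are attained. -/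
open scoped BigOperators

/-- A directed multigraph: arcs `A` with tail and head maps into a vertex type `V`. -/
structure MultiDigraph (V : Type) (A : Type) where
  tail : A → V
  head : A → V

namespace MultiDigraph

variable {V A : Type}

/-- `p` is (the arc list of) a simple directed `s`-`t`-path in `D`. -/
def IsPath (D : MultiDigraph V A) (s t : V) (p : List A) : Prop :=
  p ≠ [] ∧ List.Chain' (fun a b => D.head a = D.tail b) p ∧
    (p.map D.tail).head? = some s ∧ (p.map D.head).getLast? = some t ∧
    (p.map D.tail ++ [t]).Nodup

/-- The set of simple `s`-`t`-paths of `D`. -/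
def pathSet (D : MultiDigraph V A) (s t : V) : Set (List A) := {p | D.IsPath s t p}

/-- `x` is a feasible `s`-`t` path flow with respect to capacities `u`. -/
def IsFlow (D : MultiDigraph V A) (s t : V) (u : A → ℚ) (x : List A → ℚ) : Prop :=
  (∀ p, 0 ≤ x p) ∧ (∀ p, x p ≠ 0 → D.IsPath s t p) ∧
    ∀ a : A, (∑ᶠ p ∈ {p : List A | D.IsPath s t p ∧ a ∈ p}, x p) ≤ u a

/-- The value of a path flow. -/
noncomputable def value (D : MultiDigraph V A) (s t : V) (x : List A → ℚ) : ℚ :=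
  ∑ᶠ p ∈ D.pathSet s t, x p

/-- `λ(x,S)`: the amount of flow on paths meeting `S`. -/
noncomputable def loss (D : MultiDigraph V A) (s t : V) (x : List A → ℚ) (S : Set A) : ℚ :=
  ∑ᶠ p ∈ {p : List A | D.IsPath s t p ∧ ∃ a ∈ S, a ∈ p}, x p

/-- The amount of flow surviving the failure of `S`. -/
noncomputable def survival (D : MultiDigraph V A) (s t : V) (x : List A → ℚ) (S : Set A) : ℚ :=
  ∑ᶠ p ∈ {p : List A | D.IsPath s t p ∧ ∀ a ∈ S, a ∉ p}, x p

/-- A feasible multicommodity path flow meeting all demands exactly. -/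
def IsMultiFlow {K : Type} (D : MultiDigraph V A) (u : A → ℚ)
    (src snk : K → V) (dem : K → ℚ) (x : K → List A → ℚ) : Prop :=
  (∀ i p, 0 ≤ x i p) ∧ (∀ i p, x i p ≠ 0 → D.IsPath (src i) (snk i) p) ∧
    (∀ a : A,
      (∑ᶠ i : K, ∑ᶠ p ∈ {p : List A | D.IsPath (src i) (snk i) p ∧ a ∈ p}, x i p) ≤ u a) ∧
    (∀ i : K, (∑ᶠ p ∈ D.pathSet (src i) (snk i), x i p) = dem i)

/-- `λ(x,S)` for a multicommodity flow. -/
noncomputable def multiLoss {K : Type} (D : MultiDigraph V A)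
    (src snk : K → V) (x : K → List A → ℚ) (S : Set A) : ℚ :=
  ∑ᶠ i : K, ∑ᶠ p ∈ {p : List A | D.IsPath (src i) (snk i) p ∧ ∃ a ∈ S, a ∈ p}, x i p

end MultiDigraph

/-- `S` is a legal failure scenario for compatibility graph `H` and budget `k`:
a clique of `H` of cardinality at most `k`. -/
def cliqueScenario {A : Type} (H : SimpleGraph A) (k : ℕ) (S : Set A) : Prop :=
  S.Finite ∧ S.ncard ≤ k ∧ H.IsClique S

/-!
Both values are the optimum of one linear program. The maximizer picks a path flow `x ≥ 0`
within the capacities and a level `v` not exceeding the surviving flow of `x` under any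
scenario `S`. A dual solution consists of scenario weights `z_S ≥ 0` with `∑ z_S = 1` and arc
prices `w_a ≥ 0` such that every path costs at least its survival probability under `z`, so
the expected surviving flow of every feasible flow is at most `∑ w_a u_a`. Strong duality,
which follows from Farkas' lemma and hence from Fourier–Motzkin elimination, makes the two
optima equal and attained; the other two inequalities follow by averaging over `z`.
-/

open Matrix Finset

lemma exists_forall_le_and_forall_le {α ι κ : Type*} [LinearOrder α] [Nonempty α] [Finite ι]
    [Finite κ] {lo : ι → α} {hi : κ → α} (h : ∀ i k, lo i ≤ hi k) :
    ∃ t, (∀ i, lo i ≤ t) ∧ ∀ k, t ≤ hi k := by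
  rcases isEmpty_or_nonempty ι with hι | hι
  · obtain ⟨t, ht⟩ := (Set.finite_range hi).bddBelow
    exact ⟨t, isEmptyElim, fun k => ht ⟨k, rfl⟩⟩
  · obtain ⟨i₀, hi₀⟩ := Finite.exists_max lo
    exact ⟨lo i₀, hi₀, h i₀⟩

namespace FourierMotzkin

variable {𝕜 : Type*} [Field 𝕜] [LinearOrder 𝕜] {I J : Type*} [DecidableEq I]

/-- Rows of the system obtained by eliminating a variable with coefficient column `a`: the rows
where it does not occur, and one row for each pair of rows where it occurs with opposite signs. -/
abbrev Row (a : I → 𝕜) : Type _ := {i // a i = 0} ⊕ {i // 0 < a i} × {i // a i < 0}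

/-- The nonnegative combination of original rows that forms a row of the eliminated system. -/
def comb (a : I → 𝕜) : Row a → I → 𝕜
  | .inl i => Pi.single i 1
  | .inr (p, q) => Pi.single p.1 (-a q) + Pi.single q.1 (a p)

def combMatrix (a : I → 𝕜) : Matrix (Row a) I 𝕜 := Matrix.of (comb a)

lemma comb_nonneg [IsStrictOrderedRing 𝕜] (a : I → 𝕜) (r : Row a) : 0 ≤ comb a r := by
  rcases r with i | ⟨p, q⟩
  · exact Pi.single_nonneg.2 zero_le_one
  · exact add_nonneg (Pi.single_nonneg.2 (neg_nonneg.2 q.2.le)) (Pi.single_nonneg.2 p.2.le)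

variable [Fintype I]

@[simp]
lemma comb_inl_dotProduct (a v : I → 𝕜) (i : {i // a i = 0}) : comb a (.inl i) ⬝ᵥ v = v i := by
  simp [comb]

@[simp]
lemma comb_inr_dotProduct (a v : I → 𝕜) (p : {i // 0 < a i}) (q : {i // a i < 0}) :
    comb a (.inr (p, q)) ⬝ᵥ v = -a q * v p + a p * v q := by
  simp [comb, add_dotProduct]

lemma comb_dotProduct_self (a : I → 𝕜) (r : Row a) : comb a r ⬝ᵥ a = 0 := by
  rcases r with i | ⟨p, q⟩
  · simpa using i.2
  · simp only [comb_inr_dotProduct]; ring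

variable [IsStrictOrderedRing 𝕜]

lemma exists_mul_le_of_comb (a d : I → 𝕜) (h : ∀ r, 0 ≤ comb a r ⬝ᵥ d) :
    ∃ t, ∀ i, a i * t ≤ d i := by
  obtain ⟨t, hlo, hhi⟩ := exists_forall_le_and_forall_le
    (lo := fun q : {i // a i < 0} => d q / a q) (hi := fun p : {i // 0 < a i} => d p / a p)
    fun q p => by
      have hpq := h (.inr (p, q))
      rw [comb_inr_dotProduct] at hpq
      rw [div_le_iff_of_neg q.2, div_mul_eq_mul_div, div_le_iff₀ p.2]
      linarith
  refine ⟨t, fun i => ?_⟩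
  rcases lt_trichotomy (a i) 0 with hi | hi | hi
  · have := hlo ⟨i, hi⟩
    rwa [div_le_iff_of_neg hi, mul_comm] at this
  · simpa [hi] using h (.inl ⟨i, hi⟩)
  · have := hhi ⟨i, hi⟩
    rwa [le_div_iff₀ hi, mul_comm] at this

lemma exists_mulVec_le_of_combMatrix [Fintype J] (A : Matrix I (Option J) 𝕜) (b : I → 𝕜)
    (x : J → 𝕜)
    (hx : (combMatrix (A · none) * A.submatrix id some) *ᵥ x ≤ combMatrix (A · none) *ᵥ b) :
    ∃ x' : Option J → 𝕜, A *ᵥ x' ≤ b := by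
  obtain ⟨t, ht⟩ := exists_mul_le_of_comb (A · none) (b - A.submatrix id some *ᵥ x) fun r => by
    have := hx r
    rw [← mulVec_mulVec] at this
    simpa [combMatrix, mulVec, dotProduct_sub, sub_nonneg] using this
  refine ⟨fun o => o.elim t x, fun i => ?_⟩
  have hi := ht i
  simp only [Pi.sub_apply, le_sub_iff_add_le] at hi
  simpa [mulVec, dotProduct, Fintype.sum_option, mul_comm t] using hi

lemma exists_certificate_of_combMatrix (A : Matrix I (Option J) 𝕜) (b : I → 𝕜)
    (y : Row (A · none) → 𝕜) (hy : 0 ≤ y)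
    (hyA : y ᵥ* (combMatrix (A · none) * A.submatrix id some) = 0)
    (hyb : y ⬝ᵥ (combMatrix (A · none) *ᵥ b) < 0) :
    ∃ y' : I → 𝕜, 0 ≤ y' ∧ y' ᵥ* A = 0 ∧ y' ⬝ᵥ b < 0 := by
  refine ⟨y ᵥ* combMatrix (A · none), fun i => ?_, ?_, by rwa [← dotProduct_mulVec]⟩
  · exact Finset.sum_nonneg fun r _ => mul_nonneg (hy r) (comb_nonneg _ r i)
  · ext (_ | j)
    · change y ᵥ* combMatrix (A · none) ⬝ᵥ (A · none) = 0
      rw [← dotProduct_mulVec]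
      convert dotProduct_zero y
      ext r
      exact comb_dotProduct_self _ r
    · rw [← vecMul_vecMul] at hyA
      exact congrFun hyA j

end FourierMotzkin

section BlockSystems

variable {R : Type*} [CommRing R] {I J K : Type*}

/-- The system `A x ≤ b`, `c ≤ y ᵥ* A`, `y ⬝ᵥ b ≤ c ⬝ᵥ x` in the variables `(x, y)`. -/
def dualityMatrix (A : Matrix I J R) (b : I → R) (c : J → R) : Matrix (I ⊕ J ⊕ Unit) (J ⊕ I) R :=
  fromBlocks A 0 (fromRows 0 (replicateRow Unit (-c))) (fromRows (-Aᵀ) (replicateRow Unit b))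

lemma dualityMatrix_mulVec [Fintype I] [Fintype J] (A : Matrix I J R) (b : I → R) (c : J → R)
    (x : J → R) (y : I → R) :
    dualityMatrix A b c *ᵥ Sum.elim x y =
      Sum.elim (A *ᵥ x) (Sum.elim (-(y ᵥ* A)) fun _ => b ⬝ᵥ y - c ⬝ᵥ x) := by
  ext (i | j | _) <;> simp [dualityMatrix, fromBlocks_mulVec, neg_mulVec, mulVec_transpose,
    replicateRow_mulVec_eq_const, sub_eq_neg_add]

/-- The constraints `v⁺ - v⁻ ≤ (M x) k` for all `k` and `B x ≤ u`, in the variables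
`(x, v⁺, v⁻)`. -/
def gameMatrix (M : Matrix K J R) (B : Matrix I J R) : Matrix (K ⊕ I) (J ⊕ Fin 2) R :=
  fromBlocks (-M) (replicateRow K ![1, -1]) B 0

lemma gameMatrix_mulVec [Fintype J] (M : Matrix K J R) (B : Matrix I J R) (x : J → R)
    (v : Fin 2 → R) :
    gameMatrix M B *ᵥ Sum.elim x v = Sum.elim (fun k => v 0 - v 1 - (M *ᵥ x) k) (B *ᵥ x) := by
  ext (k | i)
  · simp [gameMatrix, replicateRow, mulVec, dotProduct, Fin.sum_univ_two]
    ring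
  · simp [gameMatrix, mulVec, dotProduct]

lemma vecMul_gameMatrix [Fintype I] [Fintype K] (M : Matrix K J R) (B : Matrix I J R)
    (z : K → R) (w : I → R) :
    Sum.elim z w ᵥ* gameMatrix M B = Sum.elim (w ᵥ* B - z ᵥ* M) ![∑ k, z k, -∑ k, z k] := by
  ext (j | i)
  · simp [gameMatrix, vecMul, dotProduct, sub_eq_neg_add]
  · fin_cases i <;> simp [gameMatrix, replicateRow, vecMul, dotProduct]

end BlockSystems

section LinearProgramming

variable {𝕜 : Type*} [Field 𝕜] [LinearOrder 𝕜] [IsStrictOrderedRing 𝕜]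

theorem farkas {I J : Type*} [Fintype I] [Fintype J] (A : Matrix I J 𝕜) (b : I → 𝕜) :
    (∃ x, A *ᵥ x ≤ b) ∨ ∃ y, 0 ≤ y ∧ y ᵥ* A = 0 ∧ y ⬝ᵥ b < 0 := by
  classical
  refine Fintype.induction_empty_option (P := fun J _ => ∀ (I : Type _) [Fintype I]
    (A : Matrix I J 𝕜) (b : I → 𝕜), (∃ x, A *ᵥ x ≤ b) ∨ ∃ y, 0 ≤ y ∧ y ᵥ* A = 0 ∧ y ⬝ᵥ b < 0)
    (fun J J' _ e ih I _ A b => ?_) (fun I _ A b => ?_) (fun J _ ih I _ A b => ?_) J I A b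
  · rcases ih I (A.submatrix id e) b with ⟨x, hx⟩ | ⟨y, hy, hyA, hyb⟩
    · refine .inl ⟨x ∘ e.symm, ?_⟩
      simpa [submatrix_mulVec_equiv] using hx
    · refine .inr ⟨y, hy, funext fun j => ?_, hyb⟩
      simpa [vecMul, dotProduct] using congrFun hyA (e.symm j)
  · by_cases hb : 0 ≤ b
    · exact .inl ⟨0, by simpa using hb⟩
    · obtain ⟨i, hi⟩ : ∃ i, b i < 0 := by simpa [Pi.le_def] using hb
      exact .inr ⟨Pi.single i 1, Pi.single_nonneg.2 zero_le_one, Subsingleton.elim _ _,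
        by simpa using hi⟩
  · open FourierMotzkin in
    rcases ih _ (combMatrix (A · none) * A.submatrix id some) (combMatrix (A · none) *ᵥ b) with
      ⟨x, hx⟩ | ⟨y, hy, hyA, hyb⟩
    · exact .inl (exists_mulVec_le_of_combMatrix A b x hx)
    · exact .inr (exists_certificate_of_combMatrix A b y hy hyA hyb)

variable {I J K : Type*} [Fintype I] [Fintype J] [Fintype K]

theorem farkas_nonneg (A : Matrix I J 𝕜) (b : I → 𝕜) :
    (∃ x, 0 ≤ x ∧ A *ᵥ x ≤ b) ∨ ∃ y, 0 ≤ y ∧ 0 ≤ y ᵥ* A ∧ y ⬝ᵥ b < 0 := by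
  classical
  rcases farkas (fromRows A (-1 : Matrix J J 𝕜)) (Sum.elim b 0) with ⟨x, hx⟩ | ⟨y, hy, hyA, hyb⟩
  · rw [fromRows_mulVec, Sum.elim_le_elim_iff] at hx
    exact .inl ⟨x, by simpa [neg_mulVec] using hx.2, hx.1⟩
  · rw [← Sum.elim_comp_inl_inr y] at hy hyA hyb
    rw [sumElim_vecMul_fromRows, vecMul_neg, vecMul_one, add_neg_eq_zero] at hyA
    rw [sumElim_dotProduct_sumElim, dotProduct_zero, add_zero] at hyb
    exact .inr ⟨y ∘ Sum.inl, fun i => hy (.inl i), hyA ▸ fun j => hy (.inr j), hyb⟩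

theorem dotProduct_le_dotProduct_of_feasible (A : Matrix I J 𝕜) {b : I → 𝕜} {c : J → 𝕜}
    {x : J → 𝕜} {y : I → 𝕜} (hx : 0 ≤ x) (hAx : A *ᵥ x ≤ b) (hy : 0 ≤ y) (hyA : c ≤ y ᵥ* A) :
    c ⬝ᵥ x ≤ y ⬝ᵥ b :=
  calc c ⬝ᵥ x ≤ (y ᵥ* A) ⬝ᵥ x := dotProduct_le_dotProduct_of_nonneg_right hyA hx
    _ = y ⬝ᵥ (A *ᵥ x) := (dotProduct_mulVec y A x).symm
    _ ≤ y ⬝ᵥ b := dotProduct_le_dotProduct_of_nonneg_left hAx hy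

theorem exists_optimal_of_feasible (A : Matrix I J 𝕜) (b : I → 𝕜) (c : J → 𝕜)
    (hP : ∃ x, 0 ≤ x ∧ A *ᵥ x ≤ b) (hD : ∃ y, 0 ≤ y ∧ c ≤ y ᵥ* A) :
    ∃ x y, 0 ≤ x ∧ A *ᵥ x ≤ b ∧ 0 ≤ y ∧ c ≤ y ᵥ* A ∧ c ⬝ᵥ x = y ⬝ᵥ b := by
  rcases farkas_nonneg (dualityMatrix A b c) (Sum.elim b (Sum.elim (-c) 0)) with
    ⟨w, hw, hAw⟩ | ⟨z, hz, hzA, hzb⟩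
  · rw [← Sum.elim_comp_inl_inr w, dualityMatrix_mulVec] at hAw
    simp only [Sum.elim_le_elim_iff, neg_le_neg_iff] at hAw
    obtain ⟨hx, hyA, hval⟩ := hAw
    have hx₀ : 0 ≤ w ∘ Sum.inl := fun j => hw _
    have hy₀ : 0 ≤ w ∘ Sum.inr := fun i => hw _
    refine ⟨_, _, hx₀, hx, hy₀, hyA, le_antisymm
      (dotProduct_le_dotProduct_of_feasible A hx₀ hx hy₀ hyA) ?_⟩
    simpa [sub_nonpos, dotProduct_comm b] using hval ()
  · exfalso
    obtain ⟨α, z', rfl⟩ : ∃ α z', z = Sum.elim α z' := ⟨_, _, (Sum.elim_comp_inl_inr z).symm⟩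
    obtain ⟨τ, l, rfl⟩ : ∃ τ l, z' = Sum.elim τ l := ⟨_, _, (Sum.elim_comp_inl_inr z').symm⟩
    have key : ∀ x y, 0 ≤ x → 0 ≤ y →
        0 ≤ α ⬝ᵥ (A *ᵥ x) - τ ⬝ᵥ (y ᵥ* A) + l () * (b ⬝ᵥ y - c ⬝ᵥ x) := by
      intro x y hx hy
      have := dotProduct_nonneg_of_nonneg hzA
        (show 0 ≤ Sum.elim x y by rintro (j | i); exacts [hx j, hy i])
      rw [← dotProduct_mulVec, dualityMatrix_mulVec] at this
      simpa [sumElim_dotProduct_sumElim, sub_eq_add_neg, add_assoc] using this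
    simp only [sumElim_dotProduct_sumElim, dotProduct_neg, dotProduct_zero, add_zero] at hzb
    obtain ⟨x₀, hx₀, hAx₀⟩ := hP
    obtain ⟨y₀, hy₀, hy₀A⟩ := hD
    -- Testing the certificate at `(τ, α)` forces `l () = 0`; testing it at `(x₀, 0)` and
    -- `(0, y₀)` then gives `0 ≤ α ⬝ᵥ b` and `τ ⬝ᵥ c ≤ 0`.
    have hl : l () = 0 := by
      have := key τ α (fun j => hz (.inr (.inl j))) (fun i => hz (.inl i))
      rw [dotProduct_mulVec, dotProduct_comm τ, sub_self, zero_add, dotProduct_comm b,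
        dotProduct_comm c] at this
      have hl₀ : 0 ≤ l () := hz (.inr (.inr ()))
      nlinarith
    have hαb : 0 ≤ α ⬝ᵥ b := by
      have := key x₀ 0 hx₀ le_rfl
      rw [hl] at this
      simp only [zero_vecMul, dotProduct_zero, sub_zero, zero_mul, add_zero] at this
      exact this.trans (dotProduct_le_dotProduct_of_nonneg_left hAx₀ fun i => hz (.inl i))
    have hτc : τ ⬝ᵥ c ≤ 0 := by
      have := key 0 y₀ le_rfl hy₀
      rw [hl] at this
      simp only [mulVec_zero, dotProduct_zero, zero_sub, zero_mul, add_zero, neg_nonneg] at this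
      exact (dotProduct_le_dotProduct_of_nonneg_left hy₀A fun j => hz (.inr (.inl j))).trans this
    linarith

/-- Minimax theorem for the game in which the maximizer plays a point `x` of the polytope
`{x ≥ 0 | B x ≤ u}`, the minimizer plays a row `k`, and the payoff is `(M x) k`. -/
theorem exists_game_value [Nonempty K] (M : Matrix K J 𝕜) (B : Matrix I J 𝕜) (u : I → 𝕜)
    (hu : 0 ≤ u) (hB : ∃ w, 0 ≤ w ∧ ∀ k, M k ≤ w ᵥ* B) :
    ∃ v, (∃ x, 0 ≤ x ∧ B *ᵥ x ≤ u ∧ ∀ k, v ≤ (M *ᵥ x) k) ∧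
      ∃ z, 0 ≤ z ∧ ∑ k, z k = 1 ∧ ∀ x, 0 ≤ x → B *ᵥ x ≤ u → z ⬝ᵥ (M *ᵥ x) ≤ v := by
  classical
  obtain ⟨w₀, hw₀, hMw₀⟩ := hB
  obtain ⟨k₀⟩ := ‹Nonempty K›
  obtain ⟨x', y, hx', hGx, hy, hyG, hval⟩ := exists_optimal_of_feasible (gameMatrix M B)
    (Sum.elim 0 u) (Sum.elim 0 ![1, -1])
    ⟨0, le_rfl, by rw [mulVec_zero]; rintro (k | i); exacts [le_rfl, hu i]⟩
    ⟨Sum.elim (Pi.single k₀ 1) w₀, by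
      rintro (k | i)
      exacts [(Pi.single_nonneg.2 zero_le_one : (0 : K → 𝕜) ≤ Pi.single k₀ 1) k, hw₀ i],
      by simp [vecMul_gameMatrix, Sum.elim_le_elim_iff]; exact hMw₀ k₀⟩
  obtain ⟨x, v, rfl⟩ : ∃ x v, x' = Sum.elim x v := ⟨_, _, (Sum.elim_comp_inl_inr x').symm⟩
  obtain ⟨z, w, rfl⟩ : ∃ z w, y = Sum.elim z w := ⟨_, _, (Sum.elim_comp_inl_inr y).symm⟩
  rw [gameMatrix_mulVec, Sum.elim_le_elim_iff] at hGx
  rw [vecMul_gameMatrix, Sum.elim_le_elim_iff] at hyG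
  simp only [sumElim_dotProduct_sumElim, zero_dotProduct, zero_add] at hval
  have hv : v 0 - v 1 = w ⬝ᵥ u := by simpa [dotProduct, Fin.sum_univ_two, sub_eq_add_neg] using hval
  refine ⟨w ⬝ᵥ u, ⟨x, fun j => hx' (.inl j), hGx.2, fun k => ?_⟩, z, fun k => hy (.inl k), ?_,
    fun x'' hx'' hBx'' => ?_⟩
  · have := hGx.1 k
    simp only [Pi.zero_apply, sub_nonpos] at this
    rwa [← hv]
  · have h₀ := hyG.2 0
    have h₁ := hyG.2 1
    simp only [Matrix.cons_val_zero, Matrix.cons_val_one, neg_le_neg_iff] at h₀ h₁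
    exact le_antisymm h₁ h₀
  · rw [dotProduct_mulVec]
    exact dotProduct_le_dotProduct_of_feasible B hx'' hBx'' (fun i => hy (.inr i))
      (sub_nonneg.1 hyG.1)

end LinearProgramming

section WeightedAverage

variable {ι R : Type*} [CommSemiring R] [LinearOrder R] [IsStrictOrderedRing R] {s : Finset ι}
  {w f : ι → R} {v : R}

lemma Finset.exists_le_of_sum_mul_le (hw : ∀ i ∈ s, 0 ≤ w i) (hw₁ : ∑ i ∈ s, w i = 1)
    (h : ∑ i ∈ s, w i * f i ≤ v) : ∃ i ∈ s, f i ≤ v := by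
  obtain ⟨i, hi, hmin⟩ := s.exists_min_image f (nonempty_of_sum_ne_zero (hw₁ ▸ one_ne_zero))
  refine ⟨i, hi, le_trans ?_ h⟩
  calc f i = ∑ j ∈ s, w j * f i := by rw [← sum_mul, hw₁, one_mul]
    _ ≤ ∑ j ∈ s, w j * f j := sum_le_sum fun j hj => mul_le_mul_of_nonneg_left (hmin j hj) (hw j hj)

lemma Finset.le_sum_mul_of_le (hw : ∀ i ∈ s, 0 ≤ w i) (hw₁ : ∑ i ∈ s, w i = 1)
    (h : ∀ i ∈ s, v ≤ f i) : v ≤ ∑ i ∈ s, w i * f i :=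
  calc v = ∑ i ∈ s, w i * v := by rw [← sum_mul, hw₁, one_mul]
    _ ≤ ∑ i ∈ s, w i * f i := sum_le_sum fun i hi => mul_le_mul_of_nonneg_left (h i hi) (hw i hi)

end WeightedAverage

lemma finsum_mem_sep_eq_sum {α M : Type*} [AddCommMonoid M] (s : Set α) [Fintype s]
    (q : α → Prop) [DecidablePred q] (f : α → M) :
    ∑ᶠ a ∈ {a ∈ s | q a}, f a = ∑ a : s, if q a then f a else 0 := by
  rw [Finset.sum_set_coe (f := fun a => if q a then f a else 0), ← Finset.sum_filter,
    ← finsum_mem_coe_finset, Finset.coe_filter]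
  simp_rw [Set.mem_toFinset]

section ExtendByZero

variable {α M : Type*} [Zero M] {p : α → Prop}

lemma extend_val_eq_zero {f : Subtype p → M} {a : α} (ha : ¬p a) :
    Function.extend Subtype.val f 0 a = 0 :=
  Function.extend_apply' _ _ _ fun ⟨b, hb⟩ => ha (hb ▸ b.2)

lemma extend_val_nonneg [Preorder M] {f : Subtype p → M} (hf : 0 ≤ f) :
    0 ≤ Function.extend Subtype.val f 0 := fun a => by
  by_cases ha : p a
  · rw [show a = (⟨a, ha⟩ : Subtype p) from rfl, Subtype.val_injective.extend_apply]
    exact hf _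
  · rw [extend_val_eq_zero ha]; rfl

end ExtendByZero

namespace MultiDigraph

variable {V A : Type} (D : MultiDigraph V A) (s t : V)

lemma IsPath.nodup {D : MultiDigraph V A} {s t : V} {p : List A} (h : D.IsPath s t p) :
    p.Nodup :=
  h.2.2.2.2.of_append_left.of_map

lemma finite_pathSet [Finite A] : (D.pathSet s t).Finite := by
  classical
  have := Fintype.ofFinite A
  exact (Set.finite_range (Subtype.val : {l : List A // l.Nodup} → List A)).subset
    fun p hp => ⟨⟨p, IsPath.nodup hp⟩, rfl⟩

variable [DecidableEq A]

def incidenceMatrix : Matrix A (D.pathSet s t) ℚ :=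
  Matrix.of fun a p => if a ∈ p.1 then 1 else 0

def survivalMatrix (𝒮 : Finset (Finset A)) : Matrix 𝒮 (D.pathSet s t) ℚ :=
  Matrix.of fun S p => if ∀ a ∈ S.1, a ∉ p.1 then 1 else 0

variable {D s t}

lemma survivalMatrix_le_one_vecMul_incidenceMatrix [Fintype A] (𝒮 : Finset (Finset A)) (S : 𝒮) :
    D.survivalMatrix s t 𝒮 S ≤ 1 ᵥ* D.incidenceMatrix s t := fun p => by
  obtain ⟨a, ha⟩ := List.exists_mem_of_ne_nil _ p.2.1
  calc D.survivalMatrix s t 𝒮 S p ≤ 1 := by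
        simp only [survivalMatrix, of_apply]; split_ifs <;> norm_num
    _ = D.incidenceMatrix s t a p := by simp [incidenceMatrix, ha]
    _ ≤ ∑ b, D.incidenceMatrix s t b p :=
        single_le_sum (f := fun b => D.incidenceMatrix s t b p)
          (fun b _ => by simp only [incidenceMatrix, of_apply]; split_ifs <;> norm_num) (mem_univ a)
    _ = (1 ᵥ* D.incidenceMatrix s t) p := by simp [vecMul, dotProduct]

variable [Fintype (D.pathSet s t)]

lemma finsum_load_eq_incidenceMatrix_mulVec (x : List A → ℚ) (a : A) :
    ∑ᶠ p ∈ {p | D.IsPath s t p ∧ a ∈ p}, x p = (D.incidenceMatrix s t *ᵥ (x ∘ (↑))) a := by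
  refine (finsum_mem_sep_eq_sum (D.pathSet s t) (a ∈ ·) x).trans ?_
  simp [incidenceMatrix, mulVec, dotProduct]

lemma survival_eq_sum (x : List A → ℚ) (S : Finset A) :
    D.survival s t x S = ∑ p : D.pathSet s t, if ∀ a ∈ S, a ∉ p.1 then x p else 0 := by
  refine (finsum_mem_sep_eq_sum (D.pathSet s t) (fun p => ∀ a ∈ S, a ∉ p) x).trans ?_
  simp

lemma survival_eq_survivalMatrix_mulVec (𝒮 : Finset (Finset A)) (x : List A → ℚ) (S : 𝒮) :
    D.survival s t x S = (D.survivalMatrix s t 𝒮 *ᵥ (x ∘ (↑))) S := by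
  simp [survival_eq_sum, survivalMatrix, mulVec, dotProduct]

lemma IsFlow.incidenceMatrix_mulVec_le {u : A → ℚ} {x : List A → ℚ} (hx : D.IsFlow s t u x) :
    D.incidenceMatrix s t *ᵥ (x ∘ (↑)) ≤ u := fun a =>
  finsum_load_eq_incidenceMatrix_mulVec (D := D) (s := s) (t := t) x a ▸ hx.2.2 a

lemma isFlow_extend {u : A → ℚ} {x : D.pathSet s t → ℚ} (hx : 0 ≤ x)
    (hxu : D.incidenceMatrix s t *ᵥ x ≤ u) : D.IsFlow s t u (Function.extend Subtype.val x 0) := by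
  refine ⟨extend_val_nonneg hx, fun p hp => by_contra fun h => hp (extend_val_eq_zero h),
    fun a => ?_⟩
  rw [finsum_load_eq_incidenceMatrix_mulVec]
  convert hxu a
  ext p
  exact Subtype.val_injective.extend_apply x 0 p

lemma finsum_expected_survival (𝒮 : Finset (Finset A)) {z : Finset A → ℚ}
    (hz : ∑ S ∈ 𝒮, z S = 1) (x : List A → ℚ) :
    ∑ᶠ p ∈ D.pathSet s t, (1 - ∑ S ∈ 𝒮 with ∃ a ∈ S, a ∈ p, z S) * x p =
      ∑ S ∈ 𝒮, z S * D.survival s t x S := by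
  have hmiss : ∀ p : List A,
      1 - ∑ S ∈ 𝒮 with ∃ a ∈ S, a ∈ p, z S = ∑ S ∈ 𝒮, if ∀ a ∈ S, a ∉ p then z S else 0 := by
    intro p
    rw [← hz, ← sum_filter_add_sum_filter_not 𝒮 (fun S => ∃ a ∈ S, a ∈ p), add_sub_cancel_left,
      sum_filter]
    simp only [not_exists, not_and]
  rw [← finsum_set_coe_eq_finsum_mem, finsum_eq_sum_of_fintype]
  simp_rw [hmiss, survival_eq_sum, sum_mul, mul_sum, ite_mul, zero_mul, mul_ite, mul_zero]
  exact sum_comm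

theorem exists_robust_value [Fintype A] {u : A → ℚ} (hu : 0 ≤ u) {𝒮 : Finset (Finset A)}
    (h𝒮 : 𝒮.Nonempty) :
    ∃ v, (∃ x, D.IsFlow s t u x ∧ ∀ S ∈ 𝒮, v ≤ D.survival s t x S) ∧
      ∃ z : Finset A → ℚ, 0 ≤ z ∧ (∀ S ∉ 𝒮, z S = 0) ∧ ∑ S ∈ 𝒮, z S = 1 ∧
        ∀ x, D.IsFlow s t u x → ∑ S ∈ 𝒮, z S * D.survival s t x S ≤ v := by
  have := h𝒮.coe_sort
  obtain ⟨v, ⟨x, hx, hxu, hxv⟩, z, hz, hz₁, hzv⟩ :=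
    exists_game_value (D.survivalMatrix s t 𝒮) (D.incidenceMatrix s t) u hu
      ⟨1, zero_le_one, survivalMatrix_le_one_vecMul_incidenceMatrix 𝒮⟩
  have hsum (g : Finset A → ℚ) :
      ∑ S ∈ 𝒮, Function.extend Subtype.val z 0 S * g S = ∑ S : 𝒮, z S * g S := by
    rw [← sum_coe_sort 𝒮]
    simp_rw [Subtype.val_injective.extend_apply]
  refine ⟨v, ⟨_, isFlow_extend hx hxu, fun S hS => ?_⟩, _, extend_val_nonneg hz,
    fun S hS => extend_val_eq_zero hS, by simpa only [Pi.one_apply, mul_one, hz₁] using hsum 1,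
    fun x' hx' => ?_⟩
  · have hrestrict : Function.extend Subtype.val x 0 ∘ (↑) = x :=
      funext (Subtype.val_injective.extend_apply x 0)
    rw [survival_eq_survivalMatrix_mulVec 𝒮 _ ⟨S, hS⟩, hrestrict]
    exact hxv _
  · rw [hsum]
    simp_rw [survival_eq_survivalMatrix_mulVec 𝒮]
    exact hzv _ (fun p => hx'.1 p) hx'.incidenceMatrix_mulVec_le

end MultiDigraph

theorem mrf_value_eq_rni_value_general
    {V A : Type} [Fintype A] [DecidableEq A]
    (D : MultiDigraph V A) (s t : V) (u : A → ℚ) (hu : ∀ a, 0 ≤ u a)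
    (k : ℕ) (hk : k ≤ Fintype.card A) :
    ∃ v : ℚ,
      (∃ x : List A → ℚ, D.IsFlow s t u x ∧
        ∀ S ∈ Finset.powersetCard k (Finset.univ : Finset A),
          v ≤ D.survival s t x (S : Set A)) ∧
      (∀ x : List A → ℚ, D.IsFlow s t u x →
        ∃ S ∈ Finset.powersetCard k (Finset.univ : Finset A),
          D.survival s t x (S : Set A) ≤ v) ∧
      (∃ z : Finset A → ℚ,
        (∀ S, 0 ≤ z S ∧ z S ≤ 1) ∧ (∀ S, z S ≠ 0 → S.card = k) ∧
        (∑ S ∈ Finset.powersetCard k (Finset.univ : Finset A), z S) = 1 ∧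
        ∀ x : List A → ℚ, D.IsFlow s t u x →
          (∑ᶠ p ∈ D.pathSet s t,
            (1 - ∑ S ∈ (Finset.powersetCard k (Finset.univ : Finset A)).filter
              (fun S => ∃ a ∈ S, a ∈ p), z S) * x p) ≤ v) ∧
      (∀ z : Finset A → ℚ,
        (∀ S, 0 ≤ z S ∧ z S ≤ 1) → (∀ S, z S ≠ 0 → S.card = k) →
        (∑ S ∈ Finset.powersetCard k (Finset.univ : Finset A), z S) = 1 →
        ∃ x : List A → ℚ, D.IsFlow s t u x ∧
          v ≤ ∑ᶠ p ∈ D.pathSet s t,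
            (1 - ∑ S ∈ (Finset.powersetCard k (Finset.univ : Finset A)).filter
              (fun S => ∃ a ∈ S, a ∈ p), z S) * x p) := by
  have := (D.finite_pathSet s t).fintype
  obtain ⟨v, ⟨x, hx, hxv⟩, z, hz, hz𝒮, hz₁, hzv⟩ :=
    D.exists_robust_value (s := s) (t := t) (u := u) hu (𝒮 := powersetCard k univ)
      (powersetCard_nonempty.2 (by simpa using hk))
  refine ⟨v, ⟨x, hx, hxv⟩,
    fun x' hx' => exists_le_of_sum_mul_le (fun S _ => hz S) hz₁ (hzv x' hx'),
    ⟨z, fun S => ⟨hz S, ?_⟩, fun S hS => ?_, hz₁, fun x' hx' => ?_⟩,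
    fun z' hz' _ hz'₁ => ⟨x, hx, ?_⟩⟩
  · by_cases hS : S ∈ powersetCard k univ
    · exact (single_le_sum (fun S _ => hz S) hS).trans_eq hz₁
    · exact (hz𝒮 S hS).trans_le zero_le_one
  · exact mem_powersetCard_univ.1 (by_contra fun h => hS (hz𝒮 S h))
  · rw [MultiDigraph.finsum_expected_survival _ hz₁]
    exact hzv x' hx'
  · rw [MultiDigraph.finsum_expected_survival _ hz'₁]
    exact le_sum_mul_of_le (fun S _ => (hz' S).1) hz'₁ hxv

/-- For a finite capacitated digraph with source `s`, sink `t` and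
interdiction budget `k ≤ |A|`, the maximum robust flow value equals the randomized
network interdiction value, and both optima are attained.  The common optimal value `v`
is characterized by: some flow guarantees survival at least `v` against every failure of
`k` arcs; no flow guarantees more; some distribution `z` over the `k`-element failure
scenarios limits the best expected surviving flow to at most `v`; and no distribution does
better. -/
theorem mrf_value_eq_rni_value
    {V A : Type} [Fintype V] [Fintype A] [DecidableEq V] [DecidableEq A]
    (D : MultiDigraph V A) (s t : V) (u : A → ℚ) (hu : ∀ a, 0 ≤ u a)
    (k : ℕ) (hk : k ≤ Fintype.card A) :
    ∃ v : ℚ,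
      (∃ x : List A → ℚ, D.IsFlow s t u x ∧
        ∀ S ∈ Finset.powersetCard k (Finset.univ : Finset A),
          v ≤ D.survival s t x (S : Set A)) ∧
      (∀ x : List A → ℚ, D.IsFlow s t u x →
        ∃ S ∈ Finset.powersetCard k (Finset.univ : Finset A),
          D.survival s t x (S : Set A) ≤ v) ∧
      (∃ z : Finset A → ℚ,
        (∀ S, 0 ≤ z S ∧ z S ≤ 1) ∧ (∀ S, z S ≠ 0 → S.card = k) ∧
        (∑ S ∈ Finset.powersetCard k (Finset.univ : Finset A), z S) = 1 ∧
        ∀ x : List A → ℚ, D.IsFlow s t u x →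
          (∑ᶠ p ∈ D.pathSet s t,
            (1 - ∑ S ∈ (Finset.powersetCard k (Finset.univ : Finset A)).filter
              (fun S => ∃ a ∈ S, a ∈ p), z S) * x p) ≤ v) ∧
      (∀ z : Finset A → ℚ,
        (∀ S, 0 ≤ z S ∧ z S ≤ 1) → (∀ S, z S ≠ 0 → S.card = k) →
        (∑ S ∈ Finset.powersetCard k (Finset.univ : Finset A), z S) = 1 →
        ∃ x : List A → ℚ, D.IsFlow s t u x ∧
          v ≤ ∑ᶠ p ∈ D.pathSet s t,
            (1 - ∑ S ∈ (Finset.powersetCard k (Finset.univ : Finset A)).filter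
              (fun S => ∃ a ∈ S, a ∈ p), z S) * x p) :=
  mrf_value_eq_rni_value_general D s t u hu k hk
end

section
/- In the full MRF-R-to-MRF-M construction, the node set U := {s_i : i ∈ K} ∪ {s} ∪ {v⁺_{a_j} : j ∈ [k−1]} satisfies: all sources s_i lie in U, no sink t_i lies in U, the total capacity of the arcs leaving U equals the total demand, ∑_{a ∈ δ⁺_{D'}(U)} u'_a = ∑_{i∈K} d_i, and exactly k−1 arcs of δ⁺_{D'}(U) have capacity M, namely the arcs (v⁺_{a_j}, v⁻_{a_j}) for j ∈ [k−1]. -/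
open scoped BigOperators

section FullConstruction

variable {V A : Type}

/-- The set `F` of incompatible ordered pairs of arcs: `(a, a')` with `{a,a'} ∉ E_H`
and `a ≻ a'` (where `≻` is given by an injective rank function). -/
def incompPairs {A : Type} (H : SimpleGraph A) (rank : A → ℕ) : A × A → Prop :=
  fun q => ¬ H.Adj q.1 q.2 ∧ rank q.2 < rank q.1

theorem incompPairs_ne {A : Type} {H : SimpleGraph A} {rank : A → ℕ} {q : A × A}
    (h : incompPairs H rank q) : q.1 ≠ q.2 := by
  intro he
  have h2 := h.2
  rw [he] at h2
  exact lt_irrefl _ h2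

/-- Commodities of the full construction: `K = {0} ∪ F` (where `none` is commodity `0`). -/
abbrev FullK (A : Type) (F : A × A → Prop) : Type := Option {q : A × A // F q}

/-- Nodes of the full construction: the nodes of `D`, the subdivision nodes `v_a⁺ = (a,true)`
and `v_a⁻ = (a,false)`, and the commodity terminals `s_i = (i,true)`, `t_i = (i,false)`. -/
abbrev FullNode (V A : Type) (F : A × A → Prop) : Type :=
  V ⊕ (A × Bool) ⊕ (FullK A F × Bool)

/-- The arcs of the digraph `D'` of the full MRF-R-to-MRF-M construction. -/
inductive FullArc (A : Type) (F : A × A → Prop) : Type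
  | s0s                                        -- (s_0, s), capacity θ
  | tt0                                        -- (t, t_0), capacity θ
  | cross (a a' : A) (h : F (a, a'))           -- (v_a⁻, v_{a'}⁺), capacity 2
  | inA (a : A)                                -- (v, v_a⁺), capacity 1
  | midA (a : A)                               -- (v_a⁺, v_a⁻), capacity M
  | outA (a : A)                               -- (v_a⁻, w), capacity 1
  | srcA (q : {q : A × A // F q}) (a : A) (h : q.val.2 ≠ a)  -- (s_i, v_a⁺), i ∈ F∖F_a⁻
  | snkA (q : {q : A × A // F q}) (a : A) (h : q.val.1 ≠ a)  -- (v_a⁻, t_i), i ∈ F∖F_a⁺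
  | src0 (a : A)                               -- (s_0, v_a⁺), capacity M − 2|F| − 1
  | snk0 (a : A)                               -- (v_a⁻, t_0), capacity M − 2|F| − 1

/-- The source node `s_i` of commodity `i`. -/
def fullSrcNode {F : A × A → Prop} (i : FullK A F) : FullNode V A F :=
  Sum.inr (Sum.inr (i, true))

/-- The sink node `t_i` of commodity `i`. -/
def fullSnkNode {F : A × A → Prop} (i : FullK A F) : FullNode V A F :=
  Sum.inr (Sum.inr (i, false))

/-- The digraph `D'` of the full construction. -/
def fullD (D : MultiDigraph V A) (s t : V) (F : A × A → Prop) :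
    MultiDigraph (FullNode V A F) (FullArc A F) where
  tail a :=
    match a with
    | .s0s => fullSrcNode none
    | .tt0 => Sum.inl t
    | .cross a _ _ => Sum.inr (Sum.inl (a, false))
    | .inA a => Sum.inl (D.tail a)
    | .midA a => Sum.inr (Sum.inl (a, true))
    | .outA a => Sum.inr (Sum.inl (a, false))
    | .srcA q _ _ => fullSrcNode (some q)
    | .snkA _ a _ => Sum.inr (Sum.inl (a, false))
    | .src0 _ => fullSrcNode none
    | .snk0 a => Sum.inr (Sum.inl (a, false))
  head a :=
    match a with
    | .s0s => Sum.inl s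
    | .tt0 => fullSnkNode none
    | .cross _ a' _ => Sum.inr (Sum.inl (a', true))
    | .inA a => Sum.inr (Sum.inl (a, true))
    | .midA a => Sum.inr (Sum.inl (a, false))
    | .outA a => Sum.inl (D.head a)
    | .srcA _ a _ => Sum.inr (Sum.inl (a, true))
    | .snkA q _ _ => fullSnkNode (some q)
    | .src0 a => Sum.inr (Sum.inl (a, true))
    | .snk0 _ => fullSnkNode none

variable [Fintype A]

/-- `|F|`, the number of incompatible ordered pairs. -/
noncomputable def nF (F : A × A → Prop) : ℕ := {q : A × A | F q}.ncard

/-- `M := max (2(|A|−1)|F| + 3, θ + 2)`. -/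
noncomputable def bigM (F : A × A → Prop) (θ : ℕ) : ℕ :=
  max (2 * (Fintype.card A - 1) * nF F + 3) (θ + 2)

/-- The capacities `u'` of the full construction. -/
noncomputable def fullCap (F : A × A → Prop) (θ : ℕ) : FullArc A F → ℚ
  | .s0s => (θ : ℚ)
  | .tt0 => (θ : ℚ)
  | .cross _ _ _ => 2
  | .inA _ => 1
  | .midA _ => (bigM F θ : ℚ)
  | .outA _ => 1
  | .srcA _ _ _ => 2
  | .snkA _ _ _ => 2
  | .src0 _ => (bigM F θ : ℚ) - 2 * (nF F : ℚ) - 1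
  | .snk0 _ => (bigM F θ : ℚ) - 2 * (nF F : ℚ) - 1

/-- The demands: `d_0 = θ + |A|·(M − 2|F| − 1)` and `d_i = 2(|A|−1)` for `i ∈ F`. -/
noncomputable def fullDem (F : A × A → Prop) (θ : ℕ) : FullK A F → ℚ
  | none => (θ : ℚ) + (Fintype.card A : ℚ) * ((bigM F θ : ℚ) - 2 * (nF F : ℚ) - 1)
  | some _ => 2 * ((Fintype.card A : ℚ) - 1)

/-- The reference path of commodity `i = (a,a') ∈ F` through both of its arcs:
`s_i – v_a⁺ – v_a⁻ – v_{a'}⁺ – v_{a'}⁻ – t_i`. -/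
def refPath1 (H : SimpleGraph A) (rank : A → ℕ)
    (q : {q : A × A // incompPairs H rank q}) :
    List (FullArc A (incompPairs H rank)) :=
  [ .srcA q q.val.1 (Ne.symm (incompPairs_ne q.2)),
    .midA q.val.1,
    .cross q.val.1 q.val.2 q.2,
    .midA q.val.2,
    .snkA q q.val.2 (incompPairs_ne q.2) ]

/-- The reference path of commodity `i = (a,a') ∈ F` through another arc `b ∉ {a,a'}`:
`s_i – v_b⁺ – v_b⁻ – t_i`. -/
def refPath2 (H : SimpleGraph A) (rank : A → ℕ)
    (q : {q : A × A // incompPairs H rank q}) (b : A)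
    (h1 : q.val.2 ≠ b) (h2 : q.val.1 ≠ b) :
    List (FullArc A (incompPairs H rank)) :=
  [ .srcA q b h1, .midA b, .snkA q b h2 ]

open Classical in
/-- The reference flow `x̂`: each commodity `i = (a,a') ∈ F` routes `2` units along
`s_i – v_a⁺ – v_a⁻ – v_{a'}⁺ – v_{a'}⁻ – t_i` and `2` units along `s_i – v_b⁺ – v_b⁻ – t_i`
for every `b ∈ A ∖ {a, a'}`; commodity `0` gets no flow from `x̂`. -/
noncomputable def refFlow (H : SimpleGraph A) (rank : A → ℕ) :
    FullK A (incompPairs H rank) → List (FullArc A (incompPairs H rank)) → ℚ :=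
  fun i p =>
    match i with
    | none => 0
    | some q =>
        if p = refPath1 H rank q ∨
            ∃ (b : A) (h1 : q.val.2 ≠ b) (h2 : q.val.1 ≠ b),
              p = refPath2 H rank q b h1 h2
        then 2 else 0

end FullConstruction

section AuxDecomp

/-- Equivalence presenting `FullArc` as a sum of its constructor classes. -/
def fullArcEquiv (A : Type) (F : A × A → Prop) :
    FullArc A F ≃
      (Unit ⊕ Unit ⊕ {q : A × A // F q} ⊕ A ⊕ A ⊕ A ⊕
        {x : {q : A × A // F q} × A // x.1.val.2 ≠ x.2} ⊕
        {x : {q : A × A // F q} × A // x.1.val.1 ≠ x.2} ⊕ A ⊕ A) where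
  toFun a :=
    match a with
    | .s0s => Sum.inl ()
    | .tt0 => Sum.inr (Sum.inl ())
    | .cross a a' h => Sum.inr (Sum.inr (Sum.inl ⟨(a, a'), h⟩))
    | .inA a => Sum.inr (Sum.inr (Sum.inr (Sum.inl a)))
    | .midA a => Sum.inr (Sum.inr (Sum.inr (Sum.inr (Sum.inl a))))
    | .outA a => Sum.inr (Sum.inr (Sum.inr (Sum.inr (Sum.inr (Sum.inl a)))))
    | .srcA q a h => Sum.inr (Sum.inr (Sum.inr (Sum.inr (Sum.inr (Sum.inr (Sum.inl ⟨(q, a), h⟩))))))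
    | .snkA q a h => Sum.inr (Sum.inr (Sum.inr (Sum.inr (Sum.inr (Sum.inr (Sum.inr (Sum.inl ⟨(q, a), h⟩)))))))
    | .src0 a => Sum.inr (Sum.inr (Sum.inr (Sum.inr (Sum.inr (Sum.inr (Sum.inr (Sum.inr (Sum.inl a))))))))
    | .snk0 a => Sum.inr (Sum.inr (Sum.inr (Sum.inr (Sum.inr (Sum.inr (Sum.inr (Sum.inr (Sum.inr a))))))))
  invFun x :=
    match x with
    | Sum.inl _ => .s0s
    | Sum.inr (Sum.inl _) => .tt0
    | Sum.inr (Sum.inr (Sum.inl ⟨(a, a'), h⟩)) => .cross a a' h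
    | Sum.inr (Sum.inr (Sum.inr (Sum.inl a))) => .inA a
    | Sum.inr (Sum.inr (Sum.inr (Sum.inr (Sum.inl a)))) => .midA a
    | Sum.inr (Sum.inr (Sum.inr (Sum.inr (Sum.inr (Sum.inl a))))) => .outA a
    | Sum.inr (Sum.inr (Sum.inr (Sum.inr (Sum.inr (Sum.inr (Sum.inl ⟨(q, a), h⟩)))))) => .srcA q a h
    | Sum.inr (Sum.inr (Sum.inr (Sum.inr (Sum.inr (Sum.inr (Sum.inr (Sum.inl ⟨(q, a), h⟩))))))) => .snkA q a h
    | Sum.inr (Sum.inr (Sum.inr (Sum.inr (Sum.inr (Sum.inr (Sum.inr (Sum.inr (Sum.inl a)))))))) => .src0 a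
    | Sum.inr (Sum.inr (Sum.inr (Sum.inr (Sum.inr (Sum.inr (Sum.inr (Sum.inr (Sum.inr a)))))))) => .snk0 a
  left_inv a := by cases a <;> rfl
  right_inv x := by
    rcases x with ⟨⟩ | ⟨⟩ | ⟨⟨a, a'⟩, h⟩ | a | a | a | ⟨⟨q, a⟩, h⟩ | ⟨⟨q, a⟩, h⟩ | a | a <;> rfl

open Classical in
noncomputable instance fullArcFintype (A : Type) [Fintype A] (F : A × A → Prop) :
    Fintype (FullArc A F) :=
  Fintype.ofEquiv _ (fullArcEquiv A F).symm

open Classical in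
theorem fullArc_sum_decomp {A : Type} [Fintype A] [DecidableEq A] (F : A × A → Prop) (f : FullArc A F → ℚ) :
    ∑ a : FullArc A F, f a =
      f .s0s + f .tt0 + (∑ q : {q : A × A // F q}, f (.cross q.val.1 q.val.2 q.2))
        + (∑ a : A, f (.inA a)) + (∑ a : A, f (.midA a)) + (∑ a : A, f (.outA a))
        + (∑ x : {x : {q : A × A // F q} × A // x.1.val.2 ≠ x.2}, f (.srcA x.val.1 x.val.2 x.2))
        + (∑ x : {x : {q : A × A // F q} × A // x.1.val.1 ≠ x.2}, f (.snkA x.val.1 x.val.2 x.2))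
        + (∑ a : A, f (.src0 a)) + (∑ a : A, f (.snk0 a)) := by
  rw [← Equiv.sum_comp (fullArcEquiv A F).symm f]
  simp only [Fintype.sum_sum_type, Fintype.sum_unique]
  simp [fullArcEquiv]
  ring

end AuxDecomp

set_option maxHeartbeats 2000000 in
/-- In the full MRF-R-to-MRF-M construction, the node set
`U := {s_i : i ∈ K} ∪ {s} ∪ {v⁺_{a_j} : j ∈ [k−1]}` contains all sources, contains no
sink, the total capacity of the arcs leaving `U` equals the total demand, and the arcs
of `δ⁺(U)` of capacity `M` are exactly the `k−1` arcs `(v⁺_{a_j}, v⁻_{a_j})`. -/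
theorem full_construction_cut
    {V A : Type} [Fintype V] [Fintype A] [DecidableEq V] [DecidableEq A]
    (D : MultiDigraph V A) (s t : V) (H : SimpleGraph A)
    (rank : A → ℕ) (hrank : Function.Injective rank)
    (hDAG : ∃ topo : V → ℕ, ∀ a : A, topo (D.tail a) < topo (D.head a))
    (hcons : ∀ a a' : A, rank a' < rank a →
      ∀ p : List A, ¬ D.IsPath (D.tail a) (D.head a') p)
    (k : ℕ) (hk : 2 ≤ k) (θ : ℕ)
    (hout : {a : A | D.tail a = s}.ncard = θ)
    (par : Fin (k - 1) → A) (hpar_inj : Function.Injective par)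
    (hpar_st : ∀ j, D.tail (par j) = s ∧ D.head (par j) = t)
    (hpar_adj : ∀ i j, i ≠ j → H.Adj (par i) (par j))
    (hpar_last : ∀ (j : Fin (k - 1)) (a : A), (∀ j', a ≠ par j') → rank a < rank (par j)) :
    -- the cut
    let F := incompPairs H rank
    let U : Set (FullNode V A F) :=
      {nd | (∃ i : FullK A F, nd = fullSrcNode i) ∨ nd = Sum.inl s ∨
        ∃ j : Fin (k - 1), nd = Sum.inr (Sum.inl (par j, true))}
    let cut : Set (FullArc A F) :=
      {a | (fullD D s t F).tail a ∈ U ∧ (fullD D s t F).head a ∉ U}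
    (∀ i : FullK A F, fullSrcNode i ∈ U) ∧
    (∀ i : FullK A F, fullSnkNode (V := V) i ∉ U) ∧
    (∑ᶠ a ∈ cut, fullCap F θ a) = (∑ᶠ i : FullK A F, fullDem F θ i) ∧
    {a ∈ cut | fullCap F θ a = (bigM F θ : ℚ)} =
      {a | ∃ j : Fin (k - 1), a = FullArc.midA (par j)} ∧
    {a ∈ cut | fullCap F θ a = (bigM F θ : ℚ)}.ncard = k - 1 := by
  classical
  intro F U cut
  obtain ⟨topo, htopo⟩ := hDAG
  have hk1 : 0 < k - 1 := by omega
  have hts : t ≠ s := by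
    intro h
    have h2 := htopo (par ⟨0, hk1⟩)
    rw [(hpar_st ⟨0, hk1⟩).1, (hpar_st ⟨0, hk1⟩).2, h] at h2
    exact lt_irrefl _ h2
  -- membership facts about U
  have hsU : (Sum.inl s : FullNode V A F) ∈ U := Or.inr (Or.inl rfl)
  have hSrcU : ∀ i : FullK A F, fullSrcNode (V := V) i ∈ U := fun i => Or.inl ⟨i, rfl⟩
  have hSnkU : ∀ i : FullK A F, fullSnkNode (V := V) i ∉ U := by
    rintro i (⟨i', h⟩ | h | ⟨j, h⟩) <;> simp [fullSrcNode, fullSnkNode] at h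
  have hminusU : ∀ a : A, (Sum.inr (Sum.inl (a, false)) : FullNode V A F) ∉ U := by
    rintro a (⟨i', h⟩ | h | ⟨j, h⟩) <;> simp [fullSrcNode] at h
  have hplusU : ∀ a : A,
      ((Sum.inr (Sum.inl (a, true)) : FullNode V A F) ∈ U ↔ ∃ j, a = par j) := by
    intro a
    constructor
    · rintro (⟨i', h⟩ | h | ⟨j, h⟩)
      · simp [fullSrcNode] at h
      · simp at h
      · simp only [Sum.inr.injEq, Sum.inl.injEq, Prod.mk.injEq] at h
        exact ⟨j, h.1⟩
    · rintro ⟨j, rfl⟩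
      exact Or.inr (Or.inr ⟨j, rfl⟩)
  have hinlU : ∀ v : V, ((Sum.inl v : FullNode V A F) ∈ U ↔ v = s) := by
    intro v
    constructor
    · rintro (⟨i', h⟩ | h | ⟨j, h⟩)
      · simp [fullSrcNode] at h
      · simpa using h
      · simp at h
    · rintro rfl; exact hsU
  -- the second component of every pair in F is not a parallel arc
  have hq2 : ∀ q : {q : A × A // F q}, ∀ j, q.val.2 ≠ par j := by
    rintro ⟨⟨a1, a2⟩, hF⟩ j h
    simp only at h
    obtain ⟨hAdj, hlt⟩ := hF
    simp only at hAdj hlt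
    have h1 : ∃ j', a1 = par j' := by
      by_contra hc
      push_neg at hc
      have h2 := hpar_last j a1 hc
      rw [h] at hlt
      omega
    obtain ⟨j', hj'⟩ := h1
    have hjj : j' ≠ j := by
      rintro rfl
      rw [h, hj'] at hlt
      exact lt_irrefl _ hlt
    rw [hj', h] at hAdj
    exact hAdj (hpar_adj j' j hjj)
  -- characterization of cut membership by constructor
  have hc_s0s : (FullArc.s0s : FullArc A F) ∉ cut := fun h => h.2 hsU
  have hc_tt0 : (FullArc.tt0 : FullArc A F) ∉ cut := fun h => hts ((hinlU t).mp h.1)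
  have hc_cross : ∀ (a a' : A) (h : F (a, a')), FullArc.cross a a' h ∉ cut :=
    fun a a' h hc => hminusU a hc.1
  have hc_outA : ∀ a : A, (FullArc.outA a : FullArc A F) ∉ cut := fun a hc => hminusU a hc.1
  have hc_snkA : ∀ (q : {q : A × A // F q}) (a : A) (h : q.val.1 ≠ a),
      FullArc.snkA q a h ∉ cut := fun q a h hc => hminusU a hc.1
  have hc_snk0 : ∀ a : A, (FullArc.snk0 a : FullArc A F) ∉ cut := fun a hc => hminusU a hc.1
  have hc_inA : ∀ a : A,
      ((FullArc.inA a : FullArc A F) ∈ cut ↔ (D.tail a = s ∧ ¬ ∃ j, a = par j)) := by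
    intro a
    constructor
    · intro hc
      exact ⟨(hinlU _).mp hc.1, fun he => hc.2 ((hplusU a).mpr he)⟩
    · rintro ⟨h1, h2⟩
      exact ⟨(hinlU _).mpr h1, fun hh => h2 ((hplusU a).mp hh)⟩
  have hc_midA : ∀ a : A, ((FullArc.midA a : FullArc A F) ∈ cut ↔ ∃ j, a = par j) := by
    intro a
    constructor
    · intro hc
      exact (hplusU a).mp hc.1
    · intro he
      exact ⟨(hplusU a).mpr he, hminusU a⟩
  have hc_srcA : ∀ (q : {q : A × A // F q}) (a : A) (h : q.val.2 ≠ a),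
      (FullArc.srcA q a h ∈ cut ↔ ¬ ∃ j, a = par j) := by
    intro q a h
    constructor
    · intro hc he
      exact hc.2 ((hplusU a).mpr he)
    · intro he
      exact ⟨hSrcU (some q), fun hh => he ((hplusU a).mp hh)⟩
  have hc_src0 : ∀ a : A, ((FullArc.src0 a : FullArc A F) ∈ cut ↔ ¬ ∃ j, a = par j) := by
    intro a
    constructor
    · intro hc he
      exact hc.2 ((hplusU a).mpr he)
    · intro he
      exact ⟨hSrcU none, fun hh => he ((hplusU a).mp hh)⟩
  -- counting
  have hPpcard : (Finset.univ.filter (fun a => ∃ j, a = par j)).card = k - 1 := by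
    have hPp : Finset.univ.filter (fun a => ∃ j, a = par j) = Finset.univ.image par := by
      ext a
      simp [eq_comm]
    rw [hPp, Finset.card_image_of_injective _ hpar_inj, Finset.card_univ, Fintype.card_fin]
  have hmk : (Finset.univ.filter (fun a => ¬ ∃ j, a = par j)).card + (k - 1) = Fintype.card A := by
    have hsplit := Finset.card_filter_add_card_filter_not
      (s := (Finset.univ : Finset A)) (p := fun a => ∃ j, a = par j)
    rw [hPpcard, Finset.card_univ] at hsplit
    omega
  have hTcard : (Finset.univ.filter (fun a => D.tail a = s)).card = θ := by
    have h := hout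
    rw [Set.ncard_eq_toFinset_card'] at h
    simpa [Set.toFinset_setOf] using h
  have hS1 : (Finset.univ.filter (fun a => D.tail a = s ∧ ¬ ∃ j, a = par j)).card + (k - 1) = θ := by
    have hsplit := Finset.card_filter_add_card_filter_not
      (s := Finset.univ.filter (fun a => D.tail a = s)) (p := fun a => ∃ j, a = par j)
    have h1 : (Finset.univ.filter (fun a => D.tail a = s)).filter (fun a => ∃ j, a = par j)
        = Finset.univ.filter (fun a => ∃ j, a = par j) := by
      ext a
      simp only [Finset.mem_filter, Finset.mem_univ, true_and, and_iff_right_iff_imp]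
      rintro ⟨j, rfl⟩
      exact (hpar_st j).1
    have h2 : (Finset.univ.filter (fun a => D.tail a = s)).filter (fun a => ¬ ∃ j, a = par j)
        = Finset.univ.filter (fun a => D.tail a = s ∧ ¬ ∃ j, a = par j) := by
      rw [Finset.filter_filter]
    rw [h1, h2, hPpcard, hTcard] at hsplit
    omega
  -- the number of incompatible pairs
  have hnFcard : nF F = Fintype.card {q : A × A // F q} := by
    simp [nF, Set.ncard_eq_toFinset_card', Set.toFinset_setOf, Fintype.card_subtype]
  -- bounds on M
  have hM3 : 3 ≤ bigM F θ :=
    le_trans (by omega) (le_max_left (2 * (Fintype.card A - 1) * nF F + 3) (θ + 2))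
  have hM3q : (3 : ℚ) ≤ (bigM F θ : ℚ) := by exact_mod_cast hM3
  -- the flow sum
  refine ⟨hSrcU, hSnkU, ?_, ?_, ?_⟩
  · -- capacity of the cut equals total demand
    set g : FullArc A F → ℚ := fun a => if a ∈ cut then fullCap F θ a else 0 with hg
    have gval : ∀ a : FullArc A F, a ∈ cut → g a = fullCap F θ a := fun a h => if_pos h
    have gval0 : ∀ a : FullArc A F, a ∉ cut → g a = 0 := fun a h => if_neg h
    have hlhs : (∑ᶠ a ∈ cut, fullCap F θ a) = ∑ a : FullArc A F, g a := by
      have hc : cut = ↑(Finset.univ.filter (· ∈ cut)) := by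
        ext a; simp
      rw [hc, finsum_mem_coe_finset, Finset.sum_filter]
    have hrhs : (∑ᶠ i : FullK A F, fullDem F θ i)
        = fullDem F θ none
          + (Fintype.card {q : A × A // F q} : ℚ) * (2 * ((Fintype.card A : ℚ) - 1)) := by
      rw [finsum_eq_sum_of_fintype, Fintype.sum_option]
      simp [fullDem, Finset.sum_const, nsmul_eq_mul]
    have e1 : g .s0s = 0 := gval0 _ hc_s0s
    have e2 : g .tt0 = 0 := gval0 _ hc_tt0
    have e3 : (∑ q : {q : A × A // F q}, g (.cross q.val.1 q.val.2 q.2)) = 0 :=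
      Finset.sum_eq_zero fun q _ => gval0 _ (hc_cross _ _ _)
    have e6 : (∑ a : A, g (.outA a)) = 0 :=
      Finset.sum_eq_zero fun a _ => gval0 _ (hc_outA a)
    have e8 : (∑ x : {x : {q : A × A // F q} × A // x.1.val.1 ≠ x.2},
        g (.snkA x.val.1 x.val.2 x.2)) = 0 :=
      Finset.sum_eq_zero fun x _ => gval0 _ (hc_snkA _ _ _)
    have e10 : (∑ a : A, g (.snk0 a)) = 0 :=
      Finset.sum_eq_zero fun a _ => gval0 _ (hc_snk0 a)
    have e4 : (∑ a : A, g (.inA a))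
        = ((Finset.univ.filter (fun a => D.tail a = s ∧ ¬ ∃ j, a = par j)).card : ℚ) := by
      have hstep : ∀ a : A, g (.inA a)
          = if (D.tail a = s ∧ ¬ ∃ j, a = par j) then (1 : ℚ) else 0 := by
        intro a
        by_cases hca : (FullArc.inA a : FullArc A F) ∈ cut
        · rw [gval _ hca, if_pos ((hc_inA a).mp hca)]
          rfl
        · rw [gval0 _ hca, if_neg (fun hh => hca ((hc_inA a).mpr hh))]
      rw [Finset.sum_congr rfl fun a _ => hstep a, ← Finset.sum_filter,
        Finset.sum_const, nsmul_eq_mul, mul_one]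
    have e5 : (∑ a : A, g (.midA a))
        = ((k - 1 : ℕ) : ℚ) * (bigM F θ : ℚ) := by
      have hstep : ∀ a : A, g (.midA a)
          = if (∃ j, a = par j) then ((bigM F θ : ℚ)) else 0 := by
        intro a
        by_cases hca : (FullArc.midA a : FullArc A F) ∈ cut
        · rw [gval _ hca, if_pos ((hc_midA a).mp hca)]
          rfl
        · rw [gval0 _ hca, if_neg (fun hh => hca ((hc_midA a).mpr hh))]
      rw [Finset.sum_congr rfl fun a _ => hstep a, ← Finset.sum_filter,
        Finset.sum_const, nsmul_eq_mul, hPpcard]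
    have e9 : (∑ a : A, g (.src0 a))
        = ((Finset.univ.filter (fun a => ¬ ∃ j, a = par j)).card : ℚ)
          * ((bigM F θ : ℚ) - 2 * (nF F : ℚ) - 1) := by
      have hstep : ∀ a : A, g (.src0 a)
          = if (¬ ∃ j, a = par j) then ((bigM F θ : ℚ) - 2 * (nF F : ℚ) - 1) else 0 := by
        intro a
        by_cases hca : (FullArc.src0 a : FullArc A F) ∈ cut
        · rw [gval _ hca, if_pos ((hc_src0 a).mp hca)]
          rfl
        · rw [gval0 _ hca, if_neg (fun hh => hca ((hc_src0 a).mpr hh))]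
      rw [Finset.sum_congr rfl fun a _ => hstep a, ← Finset.sum_filter,
        Finset.sum_const, nsmul_eq_mul]
    have e7 : (∑ x : {x : {q : A × A // F q} × A // x.1.val.2 ≠ x.2},
        g (.srcA x.val.1 x.val.2 x.2))
        = (Fintype.card {q : A × A // F q} : ℚ)
          * (2 * (((Finset.univ.filter (fun a => ¬ ∃ j, a = par j)).card : ℚ) - 1)) := by
      have hstep : ∀ x : {x : {q : A × A // F q} × A // x.1.val.2 ≠ x.2},
          g (.srcA x.val.1 x.val.2 x.2)
            = if (¬ ∃ j, x.val.2 = par j) then (2 : ℚ) else 0 := by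
        intro x
        by_cases hca : (FullArc.srcA x.val.1 x.val.2 x.2 : FullArc A F) ∈ cut
        · rw [gval _ hca, if_pos ((hc_srcA _ _ _).mp hca)]
          rfl
        · rw [gval0 _ hca, if_neg (fun hh => hca ((hc_srcA _ _ _).mpr hh))]
      rw [Finset.sum_congr rfl fun x _ => hstep x]
      rw [← Finset.sum_subtype
        (Finset.univ.filter (fun y : {q : A × A // F q} × A => y.1.val.2 ≠ y.2))
        (by intro y; simp)
        (fun y : {q : A × A // F q} × A => if (¬ ∃ j, y.2 = par j) then (2 : ℚ) else 0)]
      rw [Finset.sum_filter, Fintype.sum_prod_type]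
      have hinner : ∀ q : {q : A × A // F q},
          (∑ a : A, if q.val.2 ≠ a then (if (¬ ∃ j, a = par j) then (2 : ℚ) else 0) else 0)
            = 2 * (((Finset.univ.filter (fun a => ¬ ∃ j, a = par j)).card : ℚ) - 1) := by
        intro q
        have hmem : q.val.2 ∈ Finset.univ.filter (fun a => ¬ ∃ j, a = par j) := by
          simp only [Finset.mem_filter, Finset.mem_univ, true_and]
          rintro ⟨j, hj⟩
          exact hq2 q j hj
        have hstep2 : ∀ a : A,
            (if q.val.2 ≠ a then (if (¬ ∃ j, a = par j) then (2 : ℚ) else 0) else 0)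
              = if a ∈ (Finset.univ.filter (fun a => ¬ ∃ j, a = par j)).erase q.val.2
                then (2 : ℚ) else 0 := by
          intro a
          by_cases h1 : q.val.2 = a
          · subst h1
            simp
          · rw [if_pos h1]
            by_cases h2 : ∃ j, a = par j
            · rw [if_neg (by simpa using h2), if_neg]
              simp only [Finset.mem_erase, Finset.mem_filter, Finset.mem_univ, true_and]
              tauto
            · rw [if_pos h2, if_pos]
              simp only [Finset.mem_erase, Finset.mem_filter, Finset.mem_univ, true_and]
              exact ⟨fun hh => h1 hh.symm, h2⟩
        rw [Finset.sum_congr rfl fun a _ => hstep2 a]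
        rw [Finset.sum_ite_mem, Finset.univ_inter, Finset.sum_const,
          Finset.card_erase_of_mem hmem, nsmul_eq_mul]
        have hpos : 1 ≤ (Finset.univ.filter (fun a => ¬ ∃ j, a = par j)).card :=
          Finset.card_pos.mpr ⟨_, hmem⟩
        rw [Nat.cast_sub hpos]
        push_cast
        ring
      rw [Finset.sum_congr rfl fun q _ => hinner q, Finset.sum_const, nsmul_eq_mul,
        Finset.card_univ]
    rw [hlhs, fullArc_sum_decomp F g, e1, e2, e3, e4, e5, e6, e7, e8, e9, e10, hrhs]
    have hs1q : ((Finset.univ.filter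
        (fun a => D.tail a = s ∧ ¬ ∃ j, a = par j)).card : ℚ) + ((k - 1 : ℕ) : ℚ)
          = (θ : ℚ) := by exact_mod_cast hS1
    have hmq : ((Finset.univ.filter (fun a => ¬ ∃ j, a = par j)).card : ℚ)
        + ((k - 1 : ℕ) : ℚ) = (Fintype.card A : ℚ) := by exact_mod_cast hmk
    rw [← hnFcard]
    simp only [fullDem]
    linear_combination hs1q + ((bigM F θ : ℚ) - 1) * hmq
  · -- the arcs of capacity M in the cut
    ext a
    simp only [Set.mem_setOf_eq, Set.mem_sep_iff]
    constructor
    · rintro ⟨hac, hcap⟩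
      cases a with
      | s0s => exact absurd hac hc_s0s
      | tt0 => exact absurd hac hc_tt0
      | cross a a' h => exact absurd hac (hc_cross a a' h)
      | inA a =>
          exfalso
          simp only [fullCap] at hcap
          linarith
      | midA a =>
          obtain ⟨j, rfl⟩ := (hc_midA a).mp hac
          exact ⟨j, rfl⟩
      | outA a => exact absurd hac (hc_outA a)
      | srcA q a h =>
          exfalso
          simp only [fullCap] at hcap
          linarith
      | snkA q a h => exact absurd hac (hc_snkA q a h)
      | src0 a =>
          exfalso
          simp only [fullCap] at hcap
          have hnn : (0 : ℚ) ≤ (nF F : ℚ) := Nat.cast_nonneg _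
          linarith
      | snk0 a => exact absurd hac (hc_snk0 a)
    · rintro ⟨j, rfl⟩
      exact ⟨(hc_midA _).mpr ⟨j, rfl⟩, rfl⟩
  · -- cardinality of the M-capacity arcs
    have hEq : {a ∈ cut | fullCap F θ a = (bigM F θ : ℚ)}
        = {a | ∃ j : Fin (k - 1), a = FullArc.midA (par j)} := by
      ext a
      simp only [Set.mem_setOf_eq, Set.mem_sep_iff]
      constructor
      · rintro ⟨hac, hcap⟩
        cases a with
        | s0s => exact absurd hac hc_s0s
        | tt0 => exact absurd hac hc_tt0
        | cross a a' h => exact absurd hac (hc_cross a a' h)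
        | inA a =>
            exfalso
            simp only [fullCap] at hcap
            linarith
        | midA a =>
            obtain ⟨j, rfl⟩ := (hc_midA a).mp hac
            exact ⟨j, rfl⟩
        | outA a => exact absurd hac (hc_outA a)
        | srcA q a h =>
            exfalso
            simp only [fullCap] at hcap
            linarith
        | snkA q a h => exact absurd hac (hc_snkA q a h)
        | src0 a =>
            exfalso
            simp only [fullCap] at hcap
            have hnn : (0 : ℚ) ≤ (nF F : ℚ) := Nat.cast_nonneg _
            linarith
        | snk0 a => exact absurd hac (hc_snk0 a)
      · rintro ⟨j, rfl⟩
        exact ⟨(hc_midA _).mpr ⟨j, rfl⟩, rfl⟩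
    rw [hEq]
    have hinj : Function.Injective (fun j : Fin (k - 1) => (FullArc.midA (par j) : FullArc A F)) := by
      intro j1 j2 h
      simp only at h
      injection h with h'
      exact hpar_inj h'
    have hrange : {a : FullArc A F | ∃ j : Fin (k - 1), a = FullArc.midA (par j)}
        = Set.range (fun j : Fin (k - 1) => FullArc.midA (par j)) := by
      ext a
      simp [Set.range, eq_comm]
    rw [hrange, ← Nat.card_coe_set_eq, Nat.card_range_of_injective hinj,
      Nat.card_eq_fintype_card, Fintype.card_fin]
end

section
/- In the clique-interdiction flow construction: if there is a set R ⊆ V with |R| ≤ r such that R ∩ C ≠ ∅ for every clique C ∈ 𝒞_ℓ(G), then X* ≠ ∅, i.e., there exists an integral s-t path flow of value θ = n+ℓ with λ(x,S) ≤ k−1 for all S ∈ S_{H,k}. -/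
open scoped BigOperators

section CliqueInterdiction

/-- Nodes of the clique-interdiction flow construction. -/
inductive CNode (n : ℕ) : Type
  | s | s0 | s1 | t0 | t1 | t
  | v (i : Fin (n + 1))
  | y (i : Fin n) (b : Bool)
  | z (i : Fin n) (b : Bool)

/-- Arcs of the clique-interdiction flow construction (all of capacity 1);
`b = false` stands for superscript `0` and `b = true` for superscript `1`;
the bundle `A_{st}` has `k − 2 = ℓ − 1` arcs. -/
inductive CArc (n r ℓ : ℕ) : Type
  | as                          -- a_s = (s, v_1)
  | at'                         -- a_t = (v_{n+1}, t)
  | vy (i : Fin n) (b : Bool)   -- (v_i, y_i^b)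
  | yz (i : Fin n) (b : Bool)   -- a^b_{v_i} = (y_i^b, z_i^b)
  | zv (i : Fin n) (b : Bool)   -- (z_i^b, v_{i+1})
  | as0 (j : Fin r)             -- bundle A_s⁰: (s, s⁰)
  | at0 (j : Fin r)             -- bundle A_t⁰: (t⁰, t)
  | s0y (i : Fin n)             -- (s⁰, y_i⁰)
  | zt0 (i : Fin n)             -- (z_i⁰, t⁰)
  | as1 (j : Fin (n - r))       -- bundle A_s¹: (s, s¹)
  | at1 (j : Fin (n - r))       -- bundle A_t¹: (t¹, t)
  | s1y (i : Fin n)             -- (s¹, y_i¹)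
  | zt1 (i : Fin n)             -- (z_i¹, t¹)
  | ast (j : Fin (ℓ - 1))       -- bundle A_{st}: (s, t)

variable (n r ℓ : ℕ)

/-- The digraph of the clique-interdiction flow construction. -/
def cD : MultiDigraph (CNode n) (CArc n r ℓ) where
  tail a :=
    match a with
    | .as => .s
    | .at' => .v (Fin.last n)
    | .vy i _ => .v i.castSucc
    | .yz i b => .y i b
    | .zv i b => .z i b
    | .as0 _ => .s
    | .at0 _ => .t0
    | .s0y _ => .s0
    | .zt0 i => .z i false
    | .as1 _ => .s
    | .at1 _ => .t1
    | .s1y _ => .s1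
    | .zt1 i => .z i true
    | .ast _ => .s
  head a :=
    match a with
    | .as => .v 0
    | .at' => .t
    | .vy i b => .y i b
    | .yz i b => .z i b
    | .zv i _ => .v i.succ
    | .as0 _ => .s0
    | .at0 _ => .t
    | .s0y i => .y i false
    | .zt0 _ => .t0
    | .as1 _ => .s1
    | .at1 _ => .t
    | .s1y i => .y i true
    | .zt1 _ => .t1
    | .ast _ => .t

/-- The set `S̄ := A_{st} ∪ {a_s, a_t}`. -/
def inSbar : CArc n r ℓ → Prop
  | .as => True
  | .at' => True
  | .ast _ => True
  | _ => False

/-- The compatibility graph of the clique-interdiction flow construction: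
`{a_v¹, a_w¹}` for every edge `{v,w}` of `G`, `{a_s, a_v¹}` for every vertex `v`,
and all 2-element subsets of `S̄`. -/
def cH (G : SimpleGraph (Fin n)) : SimpleGraph (CArc n r ℓ) :=
  SimpleGraph.fromRel (fun x y =>
    (∃ i j : Fin n, G.Adj i j ∧ x = CArc.yz i true ∧ y = CArc.yz j true) ∨
    (∃ i : Fin n, x = CArc.as ∧ y = CArc.yz i true) ∨
    (inSbar n r ℓ x ∧ inSbar n r ℓ y))

/-- Membership in `X*`: an integral `s`-`t` path flow of value `θ = n + ℓ` (unit
capacities) with `λ(x,S) ≤ k − 1 = ℓ` for every clique scenario `S ∈ S_{H,k}`,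
`k = ℓ + 1`. -/
def memXstar (G : SimpleGraph (Fin n)) (x : List (CArc n r ℓ) → ℚ) : Prop :=
  (cD n r ℓ).IsFlow CNode.s CNode.t (fun _ => 1) x ∧
  (∀ p, ∃ zp : ℤ, x p = (zp : ℚ)) ∧
  (cD n r ℓ).value CNode.s CNode.t x = (n : ℚ) + (ℓ : ℚ) ∧
  (∀ S : Set (CArc n r ℓ), cliqueScenario (cH n r ℓ G) (ℓ + 1) S →
    (cD n r ℓ).loss CNode.s CNode.t x S ≤ (ℓ : ℚ))

end CliqueInterdiction

/-!
Extend `R` to a set `R'` of exactly `r` vertices. Send one unit along the main path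
`s → v₁ → ⋯ → v_{n+1} → t`, which uses `a_v¹` for `v ∈ R'` and `a_v⁰` otherwise; one unit
along `s → s⁰ → y_v⁰ → z_v⁰ → t⁰ → t` for each `v ∈ R'` and along
`s → s¹ → y_v¹ → z_v¹ → t¹ → t` for each `v ∉ R'`, the bundles having exactly the right sizes;
and one unit on each arc of `A_{st}`. These `n + ℓ` paths are arc-disjoint. A clique of `H` lies
in `{a_s} ∪ {a_v¹ : v ∈ V}`, lies in `S̄`, or is a single arc. In `S̄` it meets only the main
path and the `ℓ - 1` arcs of `A_{st}`. In the first case it meets only the main path and the side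
paths of a clique of `G` avoiding `R`, which has fewer than `ℓ` vertices since `R` hits every
`ℓ`-clique.
-/

open Finset

namespace MultiDigraph

variable {V A : Type} (D : MultiDigraph V A)

inductive IsWalk : V → V → List A → Prop
  | single {a : A} {u v : V} : D.tail a = u → D.head a = v → IsWalk u v [a]
  | cons {a : A} {u w v : V} {p : List A} : D.tail a = u → D.head a = w → IsWalk w v p →
      IsWalk u v (a :: p)

variable {D}

theorem IsWalk.isPath_of_potential (φ : V → ℕ) (hφ : ∀ a, φ (D.tail a) < φ (D.head a))
    {u v : V} {p : List A} (h : D.IsWalk u v p) : D.IsPath u v p := by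
  suffices D.IsPath u v p ∧ ∀ x ∈ p.map D.tail ++ [v], φ u ≤ φ x from this.1
  induction h with
  | @single a _ _ hu hv =>
    subst hu hv
    have hlt := hφ a
    refine ⟨⟨List.cons_ne_nil _ _, List.isChain_singleton _, rfl, rfl, ?_⟩, by simp [hlt.le]⟩
    simpa using fun h => hlt.ne (congrArg φ h)
  | @cons a _ _ _ _ hu hw _ ih =>
    subst hu hw
    obtain ⟨⟨hne, hchain, hhead, hlast, hnodup⟩, hge⟩ := ih
    have ha := hφ a
    obtain ⟨b, q, rfl⟩ := List.exists_cons_of_ne_nil hne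
    simp only [List.map_cons, List.head?_cons, Option.some.injEq] at hhead
    refine ⟨⟨by simp, hchain.cons_cons hhead.symm, by simp, ?_, ?_⟩, ?_⟩
    · simpa using hlast
    · rw [List.map_cons, List.cons_append, List.nodup_cons]
      exact ⟨fun hx => (hge _ hx).not_gt ha, hnodup⟩
    · intro x hx
      rw [List.map_cons, List.cons_append, List.mem_cons] at hx
      rcases hx with rfl | hx
      · exact le_rfl
      · exact ha.le.trans (hge x hx)

end MultiDigraph

section UnitPathFlow

variable {A ι : Type} [Fintype ι]

open Classical in
noncomputable def unitPathFlow (P : ι → List A) (p : List A) : ℚ := #{i | P i = p}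

theorem finsum_mem_unitPathFlow (P : ι → List A) (T : Set (List A)) [DecidablePred (· ∈ T)] :
    ∑ᶠ p ∈ T, unitPathFlow P p = #{i | P i ∈ T} := by
  classical
  set s : Finset ι := {i | P i ∈ T}
  have hsupp : T ∩ Function.support (unitPathFlow P) ⊆ ↑(s.image P) := by
    rintro p ⟨hpT, hp⟩
    obtain ⟨i, hi⟩ : ∃ i, P i = p := by simpa [unitPathFlow] using hp
    exact mem_image.2 ⟨i, by simp [s, hi, hpT], hi⟩
  have himage : ↑(s.image P) ⊆ T := by
    intro p hp
    obtain ⟨i, hi, rfl⟩ := mem_image.1 hp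
    exact (mem_filter.1 hi).2
  rw [finsum_mem_eq_sum_of_subset _ hsupp himage, card_eq_sum_card_image P s, Nat.cast_sum]
  refine sum_congr rfl fun p hp => ?_
  rw [unitPathFlow, filter_filter]
  congr 2
  ext i
  simp only [mem_filter, mem_univ, true_and]
  exact ⟨fun h => ⟨h ▸ himage hp, h⟩, And.right⟩

namespace MultiDigraph

variable {V : Type} {D : MultiDigraph V A} {s t : V} {P : ι → List A}

theorem isFlow_unitPathFlow (hP : ∀ i, D.IsPath s t (P i))
    (hdisj : ∀ a i j, a ∈ P i → a ∈ P j → i = j) :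
    D.IsFlow s t (fun _ => 1) (unitPathFlow P) := by
  classical
  refine ⟨fun p => Nat.cast_nonneg _, fun p hp => ?_, fun a => ?_⟩
  · obtain ⟨i, rfl⟩ : ∃ i, P i = p := by simpa [unitPathFlow] using hp
    exact hP i
  · rw [finsum_mem_unitPathFlow, Nat.cast_le_one, card_le_one]
    intro i hi j hj
    exact hdisj a i j (mem_filter.1 hi).2.2 (mem_filter.1 hj).2.2

theorem value_unitPathFlow (hP : ∀ i, D.IsPath s t (P i)) :
    D.value s t (unitPathFlow P) = Fintype.card ι := by
  classical
  rw [value, finsum_mem_unitPathFlow,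
    filter_true_of_mem (p := (P · ∈ D.pathSet s t)) fun i _ => hP i, card_univ]

theorem loss_unitPathFlow_le {S : Set A} {K : Finset ι} (hK : ∀ i, ∀ a ∈ S, a ∈ P i → i ∈ K) :
    D.loss s t (unitPathFlow P) S ≤ #K := by
  classical
  rw [loss, finsum_mem_unitPathFlow]
  refine Nat.cast_le.2 (card_le_card fun i hi => ?_)
  obtain ⟨-, a, haS, hai⟩ := (mem_filter.1 hi).2
  exact hK i a haS hai

end MultiDigraph

end UnitPathFlow

theorem SimpleGraph.IsClique.card_lt_of_disjoint {V : Type} {G : SimpleGraph V} {C R : Finset V}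
    {ℓ : ℕ} (hC : G.IsClique (C : Set V)) (hCR : Disjoint C R)
    (hhit : ∀ C : Finset V, G.IsClique (C : Set V) → #C = ℓ → ∃ v ∈ C, v ∈ R) : #C < ℓ := by
  by_contra! h
  obtain ⟨C₀, hC₀, hcard⟩ := exists_subset_card_eq h
  obtain ⟨v, hv, hvR⟩ := hhit C₀ (hC.subset (coe_subset.2 hC₀)) hcard
  exact Finset.disjoint_left.1 hCR (hC₀ hv) hvR

theorem exists_equiv_sum_forall_isLeft {α : Type} [Fintype α] {R : Finset α} {r m : ℕ}
    (hR : #R ≤ r) (hm : r + m = Fintype.card α) :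
    ∃ e : α ≃ Fin r ⊕ Fin m, ∀ i ∈ R, (e i).isLeft := by
  classical
  obtain ⟨R', hRR', hcard⟩ := exists_superset_card_eq hR (by omega)
  let e₀ : {i // i ∈ R'} ≃ Fin r := Fintype.equivFinOfCardEq (by simp [hcard])
  let e₁ : {i // i ∉ R'} ≃ Fin m :=
    Fintype.equivFinOfCardEq (by rw [Fintype.card_subtype_compl]; simp; omega)
  refine ⟨(Equiv.sumCompl (· ∈ R')).symm.trans (e₀.sumCongr e₁), fun i hi => ?_⟩
  simp [Equiv.sumCompl_symm_apply_of_pos (hRR' hi)]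

namespace CliqueInterdiction

variable {n r ℓ : ℕ} {G : SimpleGraph (Fin n)}

/-- The arcs `a_s` and `a_v¹`, `v ∈ V`. -/
def inVertexArcs : CArc n r ℓ → Prop
  | .as => True
  | .yz _ true => True
  | _ => False

theorem cH_adj_cases {x y : CArc n r ℓ} (h : (cH n r ℓ G).Adj x y) :
    (inVertexArcs x ∧ inVertexArcs y) ∨ (inSbar n r ℓ x ∧ inSbar n r ℓ y) := by
  rw [cH, SimpleGraph.fromRel_adj] at h
  obtain ⟨-, h | h⟩ := h <;> rcases h with ⟨i, j, -, rfl, rfl⟩ | ⟨i, rfl, rfl⟩ | h <;>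
    simp_all [inVertexArcs]

theorem cH_adj_yz {i j : Fin n} (h : (cH n r ℓ G).Adj (.yz i true) (.yz j true)) : G.Adj i j := by
  rw [cH, SimpleGraph.fromRel_adj] at h
  obtain ⟨-, h | h⟩ := h <;> simp_all [inSbar, G.adj_comm]

theorem cH_isClique_cases {S : Set (CArc n r ℓ)} (hS : (cH n r ℓ G).IsClique S) :
    (∀ a ∈ S, inVertexArcs a) ∨ (∀ a ∈ S, inSbar n r ℓ a) ∨ ∃ a₀, S ⊆ {a₀} := by
  refine or_iff_not_imp_left.2 fun hV => ?_
  obtain ⟨a₀, ha₀, hna₀⟩ := not_forall₂.1 hV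
  have hSbar : ∀ c ∈ S, c ≠ a₀ → inSbar n r ℓ c ∧ inSbar n r ℓ a₀ := fun c hc hne =>
    (cH_adj_cases (hS hc ha₀ hne)).resolve_left fun h => hna₀ h.2
  by_cases h₀ : inSbar n r ℓ a₀
  · refine Or.inl fun c hc => ?_
    obtain rfl | hne := eq_or_ne c a₀
    exacts [h₀, (hSbar c hc hne).1]
  · exact Or.inr ⟨a₀, fun c hc => by_contra fun hne => h₀ (hSbar c hc hne).2⟩

def nodeRank : CNode n → ℕ
  | .s => 0
  | .s0 | .s1 => 1
  | .v i => 3 * i + 2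
  | .y i _ => 3 * i + 3
  | .z i _ => 3 * i + 4
  | .t0 | .t1 => 3 * n + 3
  | .t => 3 * n + 4

theorem nodeRank_tail_lt_head (a : CArc n r ℓ) :
    nodeRank ((cD n r ℓ).tail a) < nodeRank ((cD n r ℓ).head a) := by
  cases a <;> simp [cD, nodeRank] <;> omega

theorem isPath_of_isWalk {u v : CNode n} {p : List (CArc n r ℓ)} (h : (cD n r ℓ).IsWalk u v p) :
    (cD n r ℓ).IsPath u v p :=
  h.isPath_of_potential nodeRank nodeRank_tail_lt_head

/-- The path `v i → y i (b i) → z i (b i) → v (i + 1) → ⋯ → v n → t`. -/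
def mainPathFrom (b : Fin n → Bool) : Fin (n + 1) → List (CArc n r ℓ) :=
  Fin.reverseInduction [.at'] fun i p => .vy i (b i) :: .yz i (b i) :: .zv i (b i) :: p

theorem isWalk_mainPathFrom (b : Fin n → Bool) (i : Fin (n + 1)) :
    (cD n r ℓ).IsWalk (.v i) .t (mainPathFrom b i) := by
  induction i using Fin.reverseInduction with
  | last =>
    rw [mainPathFrom, Fin.reverseInduction_last]
    exact .single rfl rfl
  | cast i ih =>
    rw [mainPathFrom, Fin.reverseInduction_castSucc]
    exact .cons rfl rfl (.cons rfl rfl (.cons rfl rfl ih))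

def mainPath (b : Fin n → Bool) : List (CArc n r ℓ) := .as :: mainPathFrom b 0

def sidePath (i : Fin n) : Fin r ⊕ Fin (n - r) → List (CArc n r ℓ)
  | .inl j => [.as0 j, .s0y i, .yz i false, .zt0 i, .at0 j]
  | .inr j => [.as1 j, .s1y i, .yz i true, .zt1 i, .at1 j]

variable (e : Fin n ≃ Fin r ⊕ Fin (n - r))

/-- The vertices `i` with `e i = inl _` are those routed through `s⁰`; the main path takes
`a_i¹` exactly for them, so that side paths and main path share no arc. -/
def flowPaths : Unit ⊕ Fin n ⊕ Fin (ℓ - 1) → List (CArc n r ℓ) :=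
  Sum.elim (fun _ => mainPath fun i => (e i).isLeft)
    (Sum.elim (fun i => sidePath i (e i)) fun j => [.ast j])

theorem isWalk_flowPaths (p : Unit ⊕ Fin n ⊕ Fin (ℓ - 1)) :
    (cD n r ℓ).IsWalk .s .t (flowPaths e p) := by
  rcases p with _ | i | j
  · exact .cons rfl rfl (isWalk_mainPathFrom _ 0)
  · rw [flowPaths, Sum.elim_inr, Sum.elim_inl]
    cases e i <;>
      exact .cons rfl rfl (.cons rfl rfl (.cons rfl rfl (.cons rfl rfl (.single rfl rfl))))
  · exact .single rfl rfl

/-- The index of the path of `flowPaths e` through an arc; arcs on no path get the main path. -/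
def arcOwner : CArc n r ℓ → Unit ⊕ Fin n ⊕ Fin (ℓ - 1)
  | .yz i c => if c = (e i).isLeft then .inl () else .inr (.inl i)
  | .as0 j | .at0 j => .inr (.inl (e.symm (.inl j)))
  | .as1 j | .at1 j => .inr (.inl (e.symm (.inr j)))
  | .s0y i | .zt0 i | .s1y i | .zt1 i => .inr (.inl i)
  | .ast j => .inr (.inr j)
  | _ => .inl ()

theorem arcOwner_of_mem_mainPathFrom (i : Fin (n + 1)) :
    ∀ a ∈ mainPathFrom (r := r) (ℓ := ℓ) (fun i => (e i).isLeft) i, arcOwner e a = .inl () := by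
  induction i using Fin.reverseInduction with
  | last => simp [mainPathFrom, arcOwner]
  | cast i ih =>
    rw [mainPathFrom, Fin.reverseInduction_castSucc]
    rintro a (_ | ⟨_, _ | ⟨_, _ | ⟨_, ha⟩⟩⟩)
    · rfl
    · simp [arcOwner]
    · rfl
    · exact ih a ha

theorem arcOwner_of_mem {p : Unit ⊕ Fin n ⊕ Fin (ℓ - 1)} {a : CArc n r ℓ}
    (h : a ∈ flowPaths e p) : arcOwner e a = p := by
  rcases p with ⟨⟩ | i | j
  · rcases List.mem_cons.1 h with rfl | h
    · rfl
    · exact arcOwner_of_mem_mainPathFrom e 0 a h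
  · cases hi : e i <;> simp [flowPaths, sidePath, hi] at h <;>
      rcases h with rfl | rfl | rfl | rfl | rfl <;> simp [arcOwner, hi, Equiv.symm_apply_eq]
  · simp [flowPaths] at h
    simp [h, arcOwner]

theorem eq_of_mem_flowPaths {a : CArc n r ℓ} {p q : Unit ⊕ Fin n ⊕ Fin (ℓ - 1)}
    (hp : a ∈ flowPaths e p) (hq : a ∈ flowPaths e q) : p = q :=
  (arcOwner_of_mem e hp).symm.trans (arcOwner_of_mem e hq)

/-- The vertices `v` whose side path runs through `a_v¹` form a clique of `G` that `R` misses,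
so fewer than `ℓ` of them are hit together with the main path. -/
theorem exists_card_le_forall_arcOwner_mem (hℓ : 1 ≤ ℓ) {R : Finset (Fin n)}
    (hR : ∀ i ∈ R, (e i).isLeft)
    (hhit : ∀ C : Finset (Fin n), G.IsClique (C : Set (Fin n)) → #C = ℓ → ∃ v ∈ C, v ∈ R)
    {S : Set (CArc n r ℓ)} (hS : (cH n r ℓ G).IsClique S) :
    ∃ K : Finset (Unit ⊕ Fin n ⊕ Fin (ℓ - 1)), #K ≤ ℓ ∧ ∀ a ∈ S, arcOwner e a ∈ K := by
  classical
  rcases cH_isClique_cases hS with hV | hSbar | ⟨a₀, ha₀⟩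
  · set C : Finset (Fin n) := {i | CArc.yz i true ∈ S ∧ (e i).isLeft = false}
    have hC : G.IsClique (C : Set (Fin n)) := fun i hi j hj hij => by
      simp only [coe_filter, mem_univ, true_and, C] at hi hj
      exact cH_adj_yz (hS hi.1 hj.1 fun h => hij (CArc.yz.inj h).1)
    have hCR : Disjoint C R := disjoint_left.2 fun i hi hiR => by
      simpa [hR i hiR] using (mem_filter.1 hi).2.2
    refine ⟨insert (.inl ()) (C.image fun i => .inr (.inl i)), ?_, fun a ha => ?_⟩
    · have := hC.card_lt_of_disjoint hCR hhit
      grw [card_insert_le, card_image_le]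
      omega
    · have := hV a ha
      rcases a with _ | _ | _ | ⟨i, _ | _⟩ <;> simp only [inVertexArcs] at this
      · simp [arcOwner]
      · cases hi : (e i).isLeft
        · refine mem_insert_of_mem (mem_image.2 ⟨i, ?_, by simp [arcOwner, hi]⟩)
          simpa [C, ha] using hi
        · simp [arcOwner, hi]
  · refine ⟨insert (.inl ()) (univ.image fun j => .inr (.inr j)), ?_, fun a ha => ?_⟩
    · grw [card_insert_le, card_image_le, card_univ, Fintype.card_fin]
      omega
    · have := hSbar a ha
      rcases a <;> simp_all [inSbar, arcOwner]
  · refine ⟨{arcOwner e a₀}, by simpa using hℓ, fun a ha => ?_⟩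
    simp [Set.mem_singleton_iff.1 (ha₀ ha)]

end CliqueInterdiction

open CliqueInterdiction MultiDigraph

/-- In the clique-interdiction flow construction: if some set
`R ⊆ V` with `|R| ≤ r` intersects every clique of `G` of size `ℓ`, then `X* ≠ ∅`,
i.e. there is an integral `s`-`t` path flow of value `θ = n + ℓ` (unit capacities)
with `λ(x,S) ≤ k − 1 = ℓ` for every clique scenario `S ∈ S_{H,k}`, `k = ℓ + 1`. -/
theorem cliqueInterdiction_flow_exists
    (n r ℓ : ℕ) (hℓ : 1 ≤ ℓ) (hr : r ≤ n) (G : SimpleGraph (Fin n))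
    (R : Finset (Fin n)) (hR : R.card ≤ r)
    (hhit : ∀ C : Finset (Fin n), G.IsClique (C : Set (Fin n)) → C.card = ℓ →
      ∃ v ∈ C, v ∈ R) :
    ∃ x : List (CArc n r ℓ) → ℚ, memXstar n r ℓ G x := by
  obtain ⟨e, he⟩ := exists_equiv_sum_forall_isLeft (m := n - r) hR (by simp; omega)
  have hpath p := isPath_of_isWalk (isWalk_flowPaths (ℓ := ℓ) e p)
  refine ⟨unitPathFlow (flowPaths e),
    isFlow_unitPathFlow hpath fun _ _ _ => eq_of_mem_flowPaths e,
    fun p => ⟨_, (Int.cast_natCast _).symm⟩, ?_, fun S hS => ?_⟩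
  · rw [value_unitPathFlow hpath]
    simp only [Fintype.card_sum, Fintype.card_unit, Fintype.card_fin]
    push_cast [Nat.cast_sub hℓ]
    ring
  · obtain ⟨K, hK, hSK⟩ := exists_card_le_forall_arcOwner_mem e hℓ he hhit hS.2.2
    calc loss _ _ _ _ S ≤ #K :=
          loss_unitPathFlow_le fun p a ha hap => (arcOwner_of_mem e hap).subst (hSK a ha)
      _ ≤ ℓ := by exact_mod_cast hK
end
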